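/- arXiv:1507.07391 — 8 statements merged into one kernel-verified Lean document; each statement's English description precedes it below -/
import Mathlib

section
/- Let p be an odd prime. Then, in the ring ℤ_p of p-adic integers, ∑_{k=0}^{p-1} C(2k,k)^2 · 16^{-k} ≡ (-1)^{(p-1)/2} (mod p^2), i.e. the truncated hypergeometric sum is congruent to the Legendre symbol (-1/p) modulo p^2. -/
/-!
Write `p = 2m + 1`. Then `C(2k,k)^2 / 16^k = C(-1/2, k)^2` and `-1/2 = m - p/2`. Factor by factor,
`(y - p/2)^2 = y (y - p) + p^2/4`, so for `k < p` (where `k!` is a `p`-adic unit)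
`C(m - p/2, k)^2 ≡ C(m, k) C(m - p, k) = C(m, k) C(-m-1, k) (mod p^2)`.
Summing over `k`, Chu–Vandermonde gives `∑_k C(m, k) C(-m-1, k) = C(-1, m) = (-1)^m` exactly.
-/

open Finset Polynomial

theorem Polynomial.descPochhammer_smeval_eq_prod_range {R : Type*} [CommRing R] (n : ℕ) (r : R) :
    (descPochhammer ℤ n).smeval r = ∏ j ∈ range n, (r - j) := by
  induction n with
  | zero => simp
  | succ n ih =>
    simp [descPochhammer_succ_right, smeval_mul, ih, prod_range_succ, smeval_sub, smeval_natCast]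

namespace Ring

variable {R : Type*} [CommRing R] [BinomialRing R]

theorem factorial_nsmul_choose_eq_prod_range (r : R) (n : ℕ) :
    n.factorial • choose r n = ∏ j ∈ range n, (r - j) := by
  rw [← descPochhammer_eq_factorial_smul_choose, descPochhammer_smeval_eq_prod_range]

theorem succ_nsmul_choose_succ (r : R) (k : ℕ) :
    (k + 1) • choose r (k + 1) = choose r k * (r - k) := by
  simpa [Nat.choose_succ_self_right, choose_one_right] using choose_smul_choose r (Nat.le_succ k)

theorem four_pow_mul_choose_neg_half {u : R} (hu : 2 * u = 1) (k : ℕ) :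
    4 ^ k * choose (-u) k = (-1) ^ k * k.centralBinom := by
  induction k with
  | zero => simp
  | succ k ih =>
    have := BinomialRing.toIsAddTorsionFree (R := R)
    apply nsmul_right_injective k.succ_ne_zero
    have hrec := succ_nsmul_choose_succ (-u) k
    have hcb := congrArg (Nat.cast : ℕ → R) (Nat.succ_mul_centralBinom_succ k)
    simp only [nsmul_eq_mul] at hrec ⊢
    push_cast at hrec hcb ⊢
    linear_combination 4 ^ (k + 1) * hrec + 4 * (-u - k) * ih - 2 * (-1) ^ k * k.centralBinom * hu
      - (-1) ^ (k + 1) * hcb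

theorem choose_neg_half_sq {u : R} (hu : 2 * u = 1) (k : ℕ) :
    choose (-u) k ^ 2 = (k.centralBinom : R) ^ 2 * u ^ (4 * k) := by
  calc choose (-u) k ^ 2 = choose (-u) k ^ 2 * (2 * u) ^ (4 * k) := by rw [hu, one_pow, mul_one]
    _ = (2 ^ (2 * k) * choose (-u) k) ^ 2 * u ^ (4 * k) := by ring
    _ = _ := by
      rw [pow_mul, show (2 : R) ^ 2 = 4 by norm_num, four_pow_mul_choose_neg_half hu, mul_pow,
        ← pow_mul, mul_comm k 2, pow_mul, neg_one_sq, one_pow, one_mul]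

theorem sq_dvd_choose_sq_sub_choose_mul_choose {u : R} (hu : 2 * u = 1) (π m : R) {k : ℕ}
    (hk : IsUnit (k.factorial : R)) :
    π ^ 2 ∣ choose (m - π * u) k ^ 2 - choose m k * choose (m - π) k := by
  have hprod : π ^ 2 ∣ (∏ j ∈ range k, (m - π * u - j)) ^ 2
      - (∏ j ∈ range k, (m - j)) * ∏ j ∈ range k, (m - π - j) := by
    rw [← prod_pow, ← prod_mul_distrib, ← Ideal.mem_span_singleton, ← SModEq.sub_mem]
    refine SModEq.prod fun j _ => SModEq.sub_mem.2 (Ideal.mem_span_singleton.2 ⟨u ^ 2, ?_⟩)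
    linear_combination (-π * (m - j)) * hu
  simp only [← factorial_nsmul_choose_eq_prod_range, nsmul_eq_mul] at hprod
  rw [← (hk.pow 2).dvd_mul_left]
  convert hprod using 1
  ring

theorem sum_range_choose_mul_choose_neg_sub_one (m : ℕ) {n : ℕ} (hmn : m < n) :
    ∑ k ∈ range n, choose (m : R) k * choose (-m - 1 : R) k = (-1) ^ m := by
  have hneg : choose (-1 : R) m = (-1) ^ m := by
    rw [choose_neg', multichoose_one, Units.smul_def, Int.coe_negOnePow_natCast]
    simp
  have hvdm := add_choose_eq (r := (m : R)) (s := -m - 1) m (Commute.all _ _)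
  rw [show (m : R) + (-m - 1) = -1 by ring, hneg, ← Nat.sum_antidiagonal_swap,
    Nat.sum_antidiagonal_eq_sum_range_succ_mk] at hvdm
  rw [hvdm, ← sum_subset (range_subset_range.2 hmn)]
  · refine sum_congr rfl fun k hk => ?_
    rw [Prod.swap, choose_natCast, choose_natCast,
      Nat.choose_symm (Nat.lt_succ_iff.1 (mem_range.1 hk))]
  · intro k _ hk
    rw [choose_natCast, Nat.choose_eq_zero_of_lt (by simpa using hk), Nat.cast_zero, zero_mul]

end Ring

namespace PadicInt

variable {p : ℕ} [Fact p.Prime]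

theorem isUnit_natCast_of_not_dvd {n : ℕ} (h : ¬p ∣ n) : IsUnit (n : ℤ_[p]) := by
  rw [isUnit_iff, norm_natCast_eq_one_iff]
  exact (Nat.Prime.coprime_iff_not_dvd Fact.out).2 h

theorem isUnit_factorial {k : ℕ} (hk : k < p) : IsUnit (k.factorial : ℤ_[p]) :=
  isUnit_natCast_of_not_dvd fun h => by
    rw [Nat.Prime.dvd_factorial Fact.out] at h
    omega

end PadicInt

/-- **Rodriguez-Villegas supercongruence (case n = 2 of Theorem 1.6).**
For an odd prime `p`, in the ring `ℤ_p` of `p`-adic integers,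
`∑_{k=0}^{p-1} C(2k,k)^2 · 16^{-k} ≡ (-1)^((p-1)/2) (mod p^2)`,
where `16^{-k}` is the inverse of `16^k` in `ℤ_p` (written via `Ring.inverse`). -/
theorem stmt1 (p : ℕ) [Fact p.Prime] (hp : Odd p) :
    (p : ℤ_[p]) ^ 2 ∣
      (∑ k ∈ Finset.range p,
        (((2 * k).choose k : ℕ) : ℤ_[p]) ^ 2 * Ring.inverse ((16 : ℤ_[p]) ^ k))
        - (-1 : ℤ_[p]) ^ ((p - 1) / 2) := by
  obtain ⟨m, hm⟩ := hp
  have hp2 : 2 ≤ p := (Fact.out : p.Prime).two_le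
  set u := Ring.inverse (2 : ℤ_[p])
  have hu : 2 * u = 1 := Ring.mul_inverse_cancel _ <| by
    exact_mod_cast PadicInt.isUnit_natCast_of_not_dvd (p := p) (n := 2) fun h => by
      have := Nat.le_of_dvd two_pos h
      omega
  have hpm : (p : ℤ_[p]) = 2 * m + 1 := by exact_mod_cast hm
  have hhalf : -u = m - p * u := by
    rw [hpm]
    linear_combination (m : ℤ_[p]) * hu
  have hterm (k : ℕ) : (((2 * k).choose k : ℕ) : ℤ_[p]) ^ 2 * Ring.inverse ((16 : ℤ_[p]) ^ k)
      = Ring.choose ((m : ℤ_[p]) - p * u) k ^ 2 := by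
    rw [← hhalf, Ring.choose_neg_half_sq hu, ← Nat.centralBinom_eq_two_mul_choose, pow_mul,
      Ring.inverse_pow, Ring.inverse_pow]
    norm_num
  have hvdm : ∑ k ∈ range p, Ring.choose (m : ℤ_[p]) k * Ring.choose ((m : ℤ_[p]) - p) k
      = (-1) ^ m := by
    rw [show (m : ℤ_[p]) - p = -m - 1 by rw [hpm]; ring]
    exact Ring.sum_range_choose_mul_choose_neg_sub_one m (by omega)
  rw [sum_congr rfl fun k _ => hterm k, show (p - 1) / 2 = m by omega, ← hvdm, ← sum_sub_distrib]
  exact dvd_sum fun k hk => Ring.sq_dvd_choose_sq_sub_choose_mul_choose hu _ _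
    (PadicInt.isUnit_factorial (mem_range.1 hk))
end

section
/- Let p be a prime with p ≡ 1 (mod 5). Then ∑_{k=0}^{p-1} ((2/5)_k / k!)^5 ≡ ∑_{k=0}^{2(p-1)/5} ((2/5)_k / k!)^5 (mod p^5) in ℤ_p; equivalently, every term with 2(p-1)/5 < k ≤ p-1 lies in p^5 ℤ_p. -/
/-- Rising factorial (Pochhammer symbol) `(a)_k = a(a+1)⋯(a+k-1)` in `ℚ_p`. -/
noncomputable def rf {p : ℕ} [Fact p.Prime] (a : ℚ_[p]) (k : ℕ) : ℚ_[p] :=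
  ∏ j ∈ Finset.range k, (a + (j : ℚ_[p]))

/-- For a prime `p ≡ 1 (mod 5)`,
`∑_{k=0}^{p-1} ((2/5)_k / k!)^5 ≡ ∑_{k=0}^{2(p-1)/5} ((2/5)_k / k!)^5 (mod p^5)`
in `ℤ_p`, i.e. the difference lies in `p^5 ℤ_p`. -/
theorem stmt2 (p : ℕ) [Fact p.Prime] (hp : p % 5 = 1) :
    ∃ z : ℤ_[p],
      (∑ k ∈ Finset.range p, (rf ((2 : ℚ_[p]) / 5) k / (k.factorial : ℚ_[p])) ^ 5)
        - (∑ k ∈ Finset.range (2 * (p - 1) / 5 + 1),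
            (rf ((2 : ℚ_[p]) / 5) k / (k.factorial : ℚ_[p])) ^ 5)
      = (p : ℚ_[p]) ^ 5 * (z : ℚ_[p]) := by
  have hpp : p.Prime := Fact.out
  have hp5 : ¬ (p : ℤ) ∣ 5 := by
    intro h
    have h2 : p ∣ 5 := Int.ofNat_dvd.mp (by exact_mod_cast h)
    have := (Nat.prime_dvd_prime_iff_eq hpp (by norm_num)).mp h2
    omega
  have h5norm : ‖(5 : ℚ_[p])‖ = 1 := by
    have h1 : ‖((5 : ℤ) : ℚ_[p])‖ ≤ 1 := Padic.norm_int_le_one _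
    have h2 : ¬ ‖((5 : ℤ) : ℚ_[p])‖ < 1 := by
      rw [Padic.norm_intCast_lt_one_iff]; exact hp5
    push_cast at h1 h2
    linarith
  set j0 : ℕ := 2 * (p - 1) / 5 with hj0
  have hple : 2 ≤ p := hpp.two_le
  have h5dvd : 5 ∣ 2 * (p - 1) := by omega
  have hj0eq : 5 * j0 = 2 * (p - 1) := Nat.mul_div_cancel' h5dvd
  have hj0lt : j0 + 1 ≤ p := by omega
  -- key factor: 2/5 + j0 = 2p/5
  have hfac : (2 : ℚ_[p]) / 5 + (j0 : ℚ_[p]) = 2 * (p : ℚ_[p]) / 5 := by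
    have h5ne : (5 : ℚ_[p]) ≠ 0 := by
      intro h; rw [h] at h5norm; simp at h5norm
    field_simp
    have : ((5 * j0 : ℕ) : ℚ_[p]) = ((2 * (p-1) : ℕ) : ℚ_[p]) := by rw [hj0eq]
    push_cast [Nat.sub_one] at this
    have hpred : ((p - 1 : ℕ) : ℚ_[p]) = (p : ℚ_[p]) - 1 := by
      push_cast [Nat.cast_sub (by omega : 1 ≤ p)]; ring
    rw [Nat.pred_eq_sub_one, hpred] at this
    linear_combination this
  have hnat1 : ∀ n : ℕ, ¬ p ∣ n → ‖((n : ℕ) : ℚ_[p])‖ = 1 := by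
    intro n hn
    have h1 : ‖((n : ℤ) : ℚ_[p])‖ ≤ 1 := Padic.norm_int_le_one _
    have h2 : ¬ ‖((n : ℤ) : ℚ_[p])‖ < 1 := by
      rw [Padic.norm_intCast_lt_one_iff]
      exact fun h => hn (Int.ofNat_dvd.mp (by exact_mod_cast h))
    push_cast at h1 h2 ⊢
    linarith
  have hfac_le : ∀ j : ℕ, ‖(2 : ℚ_[p]) / 5 + (j : ℚ_[p])‖ ≤ 1 := by
    intro j
    have h5ne : (5 : ℚ_[p]) ≠ 0 := by
      intro h; rw [h] at h5norm; simp at h5norm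
    have he : (2 : ℚ_[p]) / 5 + (j : ℚ_[p]) = ((2 + 5 * j : ℤ) : ℚ_[p]) / 5 := by
      push_cast; field_simp
    rw [he, norm_div, h5norm, div_one]
    exact Padic.norm_int_le_one _
  have hj0norm : ‖(2 : ℚ_[p]) / 5 + (j0 : ℚ_[p])‖ ≤ (p : ℝ)⁻¹ := by
    rw [hfac, show 2 * (p : ℚ_[p]) / 5 = ((2 : ℤ) : ℚ_[p]) / 5 * (p : ℚ_[p]) by ring,
      norm_mul, norm_div, h5norm, div_one, Padic.norm_p]
    calc ‖((2 : ℤ) : ℚ_[p])‖ * ((p : ℝ))⁻¹ ≤ 1 * ((p : ℝ))⁻¹ := by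
          apply mul_le_mul_of_nonneg_right (Padic.norm_int_le_one _)
          positivity
      _ = ((p : ℝ))⁻¹ := one_mul _
  have hterm : ∀ k ∈ Finset.Ico (j0 + 1) p,
      ‖(rf ((2 : ℚ_[p]) / 5) k / (k.factorial : ℚ_[p])) ^ 5‖ ≤ ((p : ℝ))⁻¹ ^ 5 := by
    intro k hk
    rw [Finset.mem_Ico] at hk
    have hrf : ‖rf ((2 : ℚ_[p]) / 5) k‖ ≤ (p : ℝ)⁻¹ := by
      have hmem : j0 ∈ Finset.range k := Finset.mem_range.mpr (by omega)
      have hrest : ‖∏ j ∈ (Finset.range k).erase j0, ((2 : ℚ_[p]) / 5 + (j : ℚ_[p]))‖ ≤ 1 := by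
        rw [norm_prod]
        exact Finset.prod_le_one (fun j _ => norm_nonneg _) (fun j _ => hfac_le j)
      rw [rf, ← Finset.mul_prod_erase _ _ hmem, norm_mul]
      calc ‖(2 : ℚ_[p]) / 5 + (j0 : ℚ_[p])‖ * ‖∏ j ∈ (Finset.range k).erase j0,
              ((2 : ℚ_[p]) / 5 + (j : ℚ_[p]))‖
          ≤ (p : ℝ)⁻¹ * 1 := mul_le_mul hj0norm hrest (norm_nonneg _) (by positivity)
        _ = (p : ℝ)⁻¹ := mul_one _
    have hkfact : ‖((k.factorial : ℕ) : ℚ_[p])‖ = 1 := by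
      apply hnat1
      rw [hpp.dvd_factorial]; omega
    rw [norm_pow, norm_div, hkfact, div_one]
    exact pow_le_pow_left₀ (norm_nonneg _) hrf 5
  set f : ℕ → ℚ_[p] := fun k => (rf ((2 : ℚ_[p]) / 5) k / (k.factorial : ℚ_[p])) ^ 5 with hf
  have hdiff : (∑ k ∈ Finset.range p, f k) - (∑ k ∈ Finset.range (j0 + 1), f k)
      = ∑ k ∈ Finset.Ico (j0 + 1) p, f k := (Finset.sum_Ico_eq_sub f hj0lt).symm
  have hdnorm : ‖(∑ k ∈ Finset.range p, f k) - (∑ k ∈ Finset.range (j0 + 1), f k)‖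
      ≤ ((p : ℝ))⁻¹ ^ 5 := by
    rw [hdiff]
    exact IsUltrametricDist.norm_sum_le_of_forall_le_of_nonneg (by positivity) hterm
  have hpne : ((p : ℚ_[p])) ≠ 0 := Nat.cast_ne_zero.mpr hpp.pos.ne'
  set x : ℚ_[p] := (∑ k ∈ Finset.range p, f k) - (∑ k ∈ Finset.range (j0 + 1), f k) with hx
  have hz : ‖x / (p : ℚ_[p]) ^ 5‖ ≤ 1 := by
    rw [norm_div, norm_pow, Padic.norm_p, div_le_one (by positivity)]
    simpa using hdnorm
  refine ⟨⟨x / (p : ℚ_[p]) ^ 5, hz⟩, ?_⟩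
  show x = (p : ℚ_[p]) ^ 5 * (x / (p : ℚ_[p]) ^ 5)
  field_simp
end

section
/- Let n ≥ 2 be an integer, p ≥ 7 a prime with p ≡ 1 (mod n), and k an integer with 0 ≤ k ≤ (p-1)/n. Then there exist a_1, a_2, a_3 ∈ ℤ_p (depending only on n and k) such that for every t ∈ pℤ_p one has (1/n + t)_k / (1 - t)_k ≡ ((1/n)_k / k!) · (1 + a_1 t + a_2 t^2 + a_3 t^3) (mod p^4) in ℤ_p. -/
open Polynomial

theorem Polynomial.exists_eq_mul_add_X_pow_mul {R : Type*} [CommRing R] (F G : R[X])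
    (hG : IsUnit (G.coeff 0)) (m : ℕ) :
    ∃ P Q : R[X], P.natDegree ≤ m ∧ F = P * G + X ^ (m + 1) * Q := by
  have hG' : IsUnit (G : PowerSeries R) := by
    rwa [PowerSeries.isUnit_iff_constantCoeff, ← PowerSeries.coeff_zero_eq_constantCoeff_apply,
      Polynomial.coeff_coe]
  set S : PowerSeries R := F * ↑hG'.unit⁻¹
  set P := PowerSeries.trunc (m + 1) S
  have hS : ((F - P * G : R[X]) : PowerSeries R) = (S - P) * G := by
    push_cast
    rw [sub_mul, mul_assoc, IsUnit.val_inv_mul, mul_one]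
  have htail : PowerSeries.X ^ (m + 1) ∣ S - (P : PowerSeries R) := by
    refine PowerSeries.X_pow_dvd_iff.2 fun d hd => ?_
    simp [P, Polynomial.coeff_coe, PowerSeries.coeff_trunc, hd]
  obtain ⟨Q, hQ⟩ : X ^ (m + 1) ∣ F - P * G := by
    refine Polynomial.X_pow_dvd_iff.2 fun d hd => ?_
    rw [← Polynomial.coeff_coe, hS]
    exact PowerSeries.X_pow_dvd_iff.1 (htail.mul_right _) d hd
  exact ⟨P, Q, Nat.le_of_lt_succ (PowerSeries.natDegree_trunc_lt S m), by rw [← hQ]; ring⟩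

theorem isUnit_ascPochhammer_eval {R : Type*} [CommSemiring R] {x : R} {k : ℕ}
    (h : ∀ j < k, IsUnit (x + j)) : IsUnit ((ascPochhammer R k).eval x) := by
  induction k with
  | zero => simp
  | succ k ih =>
    rw [ascPochhammer_succ_eval]
    exact (ih fun j hj => h j (by omega)).mul (h k (by omega))

namespace PadicInt

variable {p : ℕ} [Fact p.Prime]

theorem isUnit_natCast_add {m : ℕ} (hm : ¬ p ∣ m) {t : ℤ_[p]} (ht : (p : ℤ_[p]) ∣ t) :
    IsUnit ((m : ℤ_[p]) + t) := by
  have hm1 : ‖(m : ℤ_[p])‖ = 1 :=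
    norm_natCast_eq_one_iff.2 ((Nat.Prime.coprime_iff_not_dvd Fact.out).2 hm)
  have ht1 : ‖t‖ < 1 := (norm_lt_one_iff_dvd t).2 ht
  rw [isUnit_iff, norm_add_eq_max_of_ne (by linarith), hm1, max_eq_left ht1.le]

theorem exists_mul_natCast_eq_one {n : ℕ} (hn : ¬ p ∣ n) :
    ∃ u : ℤ_[p], u * n = 1 ∧ (u : ℚ_[p]) = 1 / n := by
  obtain ⟨u, hu⟩ := (isUnit_natCast_add hn (dvd_zero _)).exists_left_inv
  rw [add_zero] at hu
  exact ⟨u, hu,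
    eq_one_div_of_mul_eq_one_left (by exact_mod_cast congrArg ((↑) : ℤ_[p] → ℚ_[p]) hu)⟩

theorem isUnit_ascPochhammer_eval_one_sub {k : ℕ} (hk : k < p) {t : ℤ_[p]}
    (ht : (p : ℤ_[p]) ∣ t) : IsUnit ((ascPochhammer ℤ_[p] k).eval (1 - t)) := by
  refine isUnit_ascPochhammer_eval fun j hj => ?_
  convert isUnit_natCast_add (Nat.not_dvd_of_pos_of_lt j.succ_pos (by omega)) (dvd_neg.2 ht)
    using 1
  push_cast
  ring

theorem isUnit_ascPochhammer_eval_of_mul_eq_one {u : ℤ_[p]} {n k : ℕ} (hu : u * n = 1)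
    (hnk : n * k < p) : IsUnit ((ascPochhammer ℤ_[p] k).eval u) := by
  have hn : n ≠ 0 := by
    rintro rfl
    simp at hu
  refine isUnit_ascPochhammer_eval fun j hj => isUnit_of_mul_isUnit_right (x := (n : ℤ_[p])) ?_
  have hnj : ¬ p ∣ 1 + n * j :=
    Nat.not_dvd_of_pos_of_lt (by omega) (by nlinarith [Nat.pos_of_ne_zero hn])
  convert isUnit_natCast_add hnj (dvd_zero _) using 1
  push_cast
  linear_combination hu

theorem exists_div_sub_mul_sum_eq_pow_mul {F G : ℤ_[p][X]} (hF : IsUnit (F.eval 0))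
    (hG : ∀ T : ℤ_[p], (p : ℤ_[p]) ∣ T → IsUnit (G.eval T)) (m : ℕ) :
    ∃ a : ℕ → ℤ_[p], a 0 = 1 ∧ ∀ T : ℤ_[p], (p : ℤ_[p]) ∣ T → ∃ z : ℤ_[p],
      ((F.eval T : ℤ_[p]) : ℚ_[p]) / (G.eval T : ℤ_[p])
        - ((F.eval 0 : ℤ_[p]) : ℚ_[p]) / (G.eval 0 : ℤ_[p])
          * ∑ i ∈ Finset.range (m + 1), (a i : ℚ_[p]) * (T : ℚ_[p]) ^ i
        = (T : ℚ_[p]) ^ (m + 1) * z := by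
  obtain ⟨P, Q, hPdeg, hFPQ⟩ := exists_eq_mul_add_X_pow_mul F G
    (by simpa [coeff_zero_eq_eval_zero] using hG 0 (dvd_zero _)) m
  have hF0 : F.eval 0 = P.coeff 0 * G.eval 0 := by
    simpa [coeff_zero_eq_eval_zero] using congrArg (eval 0) hFPQ
  obtain ⟨c, hc⟩ := (isUnit_of_mul_isUnit_left (hF0 ▸ hF)).exists_left_inv
  refine ⟨fun i => c * P.coeff i, hc, fun T hT => ?_⟩
  obtain ⟨g, hg⟩ := (hG T hT).exists_left_inv
  refine ⟨Q.eval T * g, ?_⟩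
  have hgT : (g : ℚ_[p]) = ((G.eval T : ℤ_[p]) : ℚ_[p])⁻¹ :=
    (inv_eq_of_mul_eq_one_left (by exact_mod_cast congrArg ((↑) : ℤ_[p] → ℚ_[p]) hg)).symm
  have key : F.eval T * g - P.coeff 0 * ∑ i ∈ Finset.range (m + 1), c * P.coeff i * T ^ i
      = T ^ (m + 1) * (Q.eval T * g) := by
    have hFT : F.eval T = P.eval T * G.eval T + T ^ (m + 1) * Q.eval T := by
      simpa using congrArg (eval T) hFPQ
    simp_rw [Finset.mul_sum, ← mul_assoc, mul_comm (P.coeff 0) c, hc, one_mul,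
      ← eval_eq_sum_range' (Nat.lt_succ_of_le hPdeg), hFT]
    linear_combination P.eval T * hg
  rw [hF0, coe_mul, mul_div_cancel_right₀ _ (coe_ne_zero.2 (hG 0 (dvd_zero _)).ne_zero),
    div_eq_mul_inv, ← hgT]
  simpa [coe_sum, mul_assoc] using congrArg ((↑) : ℤ_[p] → ℚ_[p]) key

end PadicInt

theorem rf_eq_eval_ascPochhammer {p : ℕ} [Fact p.Prime] (a : ℚ_[p]) (k : ℕ) :
    rf a k = (ascPochhammer ℚ_[p] k).eval a := by
  induction k with
  | zero => simp [rf]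
  | succ k ih => rw [rf, Finset.prod_range_succ, ← rf, ih, ascPochhammer_succ_eval]

theorem rf_coe {p : ℕ} [Fact p.Prime] (x : ℤ_[p]) (k : ℕ) :
    rf (x : ℚ_[p]) k = ((ascPochhammer ℤ_[p] k).eval x : ℤ_[p]) := by
  rw [rf_eq_eval_ascPochhammer, ascPochhammer_eval₂ PadicInt.Coe.ringHom]
  exact eval₂_hom PadicInt.Coe.ringHom x

theorem stmt5_general (n p : ℕ) [Fact p.Prime] (hpn : p % n = 1)
    (k : ℕ) (hk : k ≤ (p - 1) / n) :
    ∃ a₁ a₂ a₃ : ℤ_[p], ∀ t : ℚ_[p], (∃ s : ℤ_[p], t = (p : ℚ_[p]) * s) →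
      ∃ z : ℤ_[p],
        rf (1 / (n : ℚ_[p]) + t) k / rf (1 - t) k
          - (rf (1 / (n : ℚ_[p])) k / (k.factorial : ℚ_[p])) *
              (1 + (a₁ : ℚ_[p]) * t + (a₂ : ℚ_[p]) * t ^ 2 + (a₃ : ℚ_[p]) * t ^ 3)
        = (p : ℚ_[p]) ^ 4 * (z : ℚ_[p]) := by
  have hp : p.Prime := Fact.out
  have hn : ¬ p ∣ n := (Nat.Prime.coprime_iff_not_dvd hp).1 <| Nat.Coprime.symm <| by
    rw [Nat.Coprime, Nat.gcd_rec, hpn, Nat.gcd_one_left]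
  have hnk : n * k < p := by
    have := Nat.mul_le_mul_left n hk
    have := Nat.mul_div_le (p - 1) n
    have := hp.one_lt
    omega
  have hkp : k < p :=
    (Nat.le_mul_of_pos_left k (Nat.pos_of_ne_zero (by rintro rfl; exact hn (dvd_zero p)))).trans_lt
      hnk
  obtain ⟨u, hu, hu'⟩ := PadicInt.exists_mul_natCast_eq_one hn
  set F := (ascPochhammer ℤ_[p] k).comp (C u + X)
  set G := (ascPochhammer ℤ_[p] k).comp (1 - X)
  have hF : ∀ T : ℤ_[p], rf (1 / (n : ℚ_[p]) + (T : ℚ_[p])) k = ((F.eval T : ℤ_[p]) : ℚ_[p]) :=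
    fun T => by rw [← hu', ← PadicInt.coe_add, rf_coe]; simp [F]
  have hG : ∀ T : ℤ_[p], rf (1 - (T : ℚ_[p])) k = ((G.eval T : ℤ_[p]) : ℚ_[p]) :=
    fun T => by rw [← PadicInt.coe_one, ← PadicInt.coe_sub, rf_coe]; simp [G]
  obtain ⟨a, ha0, ha⟩ := PadicInt.exists_div_sub_mul_sum_eq_pow_mul (F := F) (G := G)
    (by simpa [F] using PadicInt.isUnit_ascPochhammer_eval_of_mul_eq_one hu hnk)
    (fun T hT => by
      simpa [G] using PadicInt.isUnit_ascPochhammer_eval_one_sub hkp hT) 3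
  refine ⟨a 1, a 2, a 3, ?_⟩
  rintro t ⟨s, rfl⟩
  obtain ⟨z, hz⟩ := ha (p * s) (dvd_mul_right _ _)
  refine ⟨s ^ 4 * z, ?_⟩
  have hT : ((p * s : ℤ_[p]) : ℚ_[p]) = p * s := by push_cast; rfl
  rw [hT] at hz
  rw [← hT, hF, hG, show rf (1 / (n : ℚ_[p])) k = F.eval 0 by simpa using hF 0,
    show (k.factorial : ℚ_[p]) = G.eval 0 by simp [G]]
  simp only [Finset.sum_range_succ, Finset.sum_range_zero, ha0] at hz
  push_cast at hz ⊢
  linear_combination hz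

/-- For an integer `n ≥ 2`, a prime `p ≥ 7` with `p ≡ 1 (mod n)`, and
`0 ≤ k ≤ (p-1)/n`, there exist `a₁, a₂, a₃ ∈ ℤ_p` (depending only on `n` and `k`)
such that for every `t ∈ pℤ_p`,
`(1/n + t)_k / (1 - t)_k ≡ ((1/n)_k / k!) · (1 + a₁ t + a₂ t² + a₃ t³) (mod p⁴)`
in `ℤ_p`. -/
theorem stmt5 (n p : ℕ) [Fact p.Prime] (hn : 2 ≤ n) (hp : 7 ≤ p) (hpn : p % n = 1)
    (k : ℕ) (hk : k ≤ (p - 1) / n) :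
    ∃ a₁ a₂ a₃ : ℤ_[p], ∀ t : ℚ_[p], (∃ s : ℤ_[p], t = (p : ℚ_[p]) * s) →
      ∃ z : ℤ_[p],
        rf (1 / (n : ℚ_[p]) + t) k / rf (1 - t) k
          - (rf (1 / (n : ℚ_[p])) k / (k.factorial : ℚ_[p])) *
              (1 + (a₁ : ℚ_[p]) * t + (a₂ : ℚ_[p]) * t ^ 2 + (a₃ : ℚ_[p]) * t ^ 3)
        = (p : ℚ_[p]) ^ 4 * (z : ℚ_[p]) :=
  stmt5_general n p hpn k hk
end

section
/- Let n ≥ 2 be an integer and p ≥ 7 a prime with p ≡ 1 (mod 2n). Then, in ℚ_p, ∑_{k=0}^{p-1} (1/n)_k^4 · ((2n-3)/(2n))_k / ( (5/(2n))_k · (k!)^4 ) ≡ ∑_{k=0}^{(p-1)/n} (1/n)_k^4 · ((2n-3)/(2n))_k / ( (5/(2n))_k · (k!)^4 ) (mod p^4), i.e. the difference of the two truncated sums lies in p^4 ℤ_p. -/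
/-!
Write `p = 2nM + 1`. Since `1/n + 2M = p/n`, every term with `2M < k < p` carries `p⁴` from
`(1/n)_k⁴`. The denominator `(5/(2n))_k` picks up one factor `p` from `k = 5M + 1` on (from
`k = M` when `n = 2`), and `((2n-3)/(2n))_k` one factor `p` from `k = (2n-3)M + 1` on, so only
the terms with `5M < k ≤ (2n-3)M` can fail to be `≡ 0 (mod p⁴)`. These are paired by
`k ↦ p + 2M - k`: with `L = p + 2M - 2k` odd, reflecting each Pochhammer symbol `(x + k)_L`
modulo `p` shows that the ratio of the two terms of a pair is `≡ (-1)^(5L) = -1 (mod p)`, so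
each pair sums to `0 (mod p⁴)`.
-/

open Finset

lemma norm_prod_sub_prod_le {ι K : Type*} [NormedField K] [IsUltrametricDist K]
    {s : Finset ι} {f g : ι → K} {r : ℝ} (hr : 0 ≤ r) (hf : ∀ i ∈ s, ‖f i‖ ≤ 1)
    (hg : ∀ i ∈ s, ‖g i‖ ≤ 1) (hfg : ∀ i ∈ s, ‖f i - g i‖ ≤ r) :
    ‖∏ i ∈ s, f i - ∏ i ∈ s, g i‖ ≤ r := by
  induction s using Finset.cons_induction with
  | empty => simpa using hr
  | cons a s ha ih =>
    simp only [forall_mem_cons] at hf hg hfg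
    have hG : ‖∏ i ∈ s, g i‖ ≤ 1 := by
      rw [norm_prod]; exact prod_le_one (fun _ _ ↦ norm_nonneg _) hg.2
    rw [prod_cons, prod_cons,
      show f a * ∏ i ∈ s, f i - g a * ∏ i ∈ s, g i
        = f a * (∏ i ∈ s, f i - ∏ i ∈ s, g i) + (f a - g a) * ∏ i ∈ s, g i by ring]
    refine (IsUltrametricDist.norm_add_le_max _ _).trans (max_le ?_ ?_) <;> rw [norm_mul]
    · exact (mul_le_of_le_one_left (norm_nonneg _) hf.1).trans (ih hf.2 hg.2 hfg.2)
    · exact (mul_le_of_le_one_right (norm_nonneg _) hG).trans hfg.1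

lemma norm_mul_pow_four_add_pow_four_mul_le {K : Type*} [NormedField K] [IsUltrametricDist K]
    {X Y Z W : K} {r : ℝ} (hX : ‖X‖ ≤ 1) (hZ : ‖Z‖ ≤ 1) (hW : ‖W‖ ≤ 1)
    (hXW : ‖X + W‖ ≤ r) (hYZ : ‖Y + Z‖ ≤ r) :
    ‖Z * W ^ 4 + X ^ 4 * Y‖ ≤ r := by
  have hsum : ∀ {a b : K}, ‖a‖ ≤ 1 → ‖b‖ ≤ 1 → ‖a + b‖ ≤ 1 := fun ha hb ↦
    (IsUltrametricDist.norm_add_le_max _ _).trans (max_le ha hb)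
  have hpow : ∀ {a : K} (m : ℕ), ‖a‖ ≤ 1 → ‖a ^ m‖ ≤ 1 := fun m ha ↦ by
    rw [norm_pow]; exact pow_le_one₀ (norm_nonneg _) ha
  rw [show Z * W ^ 4 + X ^ 4 * Y = X ^ 4 * (Y + Z) + Z * (W - X) * (X ^ 2 + W ^ 2) * (X + W) by
    ring]
  refine (IsUltrametricDist.norm_add_le_max _ _).trans (max_le ?_ ?_) <;> rw [norm_mul]
  · exact (mul_le_of_le_one_left (norm_nonneg _) (hpow 4 hX)).trans hYZ
  · have hWX : ‖W - X‖ ≤ 1 := by rw [sub_eq_add_neg]; exact hsum hW (by rwa [norm_neg])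
    refine (mul_le_of_le_one_left (norm_nonneg _) ?_).trans hXW
    rw [norm_mul, norm_mul]
    exact mul_le_one₀ (mul_le_one₀ hZ (norm_nonneg _) hWX) (norm_nonneg _)
      (hsum (hpow 2 hX) (hpow 2 hW))

lemma norm_add_natCast_le_one {K : Type*} [NormedField K] [IsUltrametricDist K] {x : K}
    (hx : ‖x‖ ≤ 1) (i : ℕ) : ‖x + i‖ ≤ 1 :=
  (IsUltrametricDist.norm_add_le_max _ _).trans
    (max_le hx (IsUltrametricDist.norm_natCast_le_one K i))

section Pochhammer

variable {p : ℕ} [Fact p.Prime]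

lemma rf_add (x : ℚ_[p]) (k L : ℕ) : rf x (k + L) = rf x k * rf (x + (k : ℚ_[p])) L := by
  simp only [rf, prod_range_add, Nat.cast_add, add_assoc]

lemma rf_one (k : ℕ) : rf (1 : ℚ_[p]) k = k.factorial := by
  rw [rf, ← prod_range_add_one_eq_factorial]
  push_cast
  exact prod_congr rfl fun _ _ ↦ add_comm _ _

lemma norm_rf_le_one {x : ℚ_[p]} (hx : ‖x‖ ≤ 1) (k : ℕ) : ‖rf x k‖ ≤ 1 := by
  rw [rf, norm_prod]
  exact prod_le_one (fun _ _ ↦ norm_nonneg _) fun j _ ↦ norm_add_natCast_le_one hx j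

/-- Reflecting `(x)_L = ∏ (x + i)` through `i ↦ L - 1 - i` pairs its factors with those of
`(-1)^L (y)_L`, each pair differing by `x + y + L - 1`. -/
lemma norm_rf_sub_neg_one_pow_mul_rf_le {x y : ℚ_[p]} {L : ℕ} {r : ℝ} (hr : 0 ≤ r)
    (hx : ‖x‖ ≤ 1) (hy : ‖y‖ ≤ 1) (hxy : ‖x + y + L - 1‖ ≤ r) :
    ‖rf x L - (-1) ^ L * rf y L‖ ≤ r := by
  have hreflect : (-1) ^ L * rf y L = ∏ i ∈ range L, -(y + ((L - 1 - i : ℕ) : ℚ_[p])) := by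
    rw [prod_neg, card_range, rf, prod_range_reflect (fun i ↦ y + (i : ℚ_[p]))]
  rw [hreflect, rf]
  refine norm_prod_sub_prod_le hr (fun i _ ↦ norm_add_natCast_le_one hx i)
    (fun i _ ↦ by rw [norm_neg]; exact norm_add_natCast_le_one hy _) fun i hi ↦ ?_
  rw [Nat.cast_sub (by simp at hi; omega), Nat.cast_sub (by simp at hi; omega)]
  refine le_of_eq_of_le (congrArg _ ?_) hxy
  push_cast
  ring

lemma norm_factorial_eq_one {k : ℕ} (hk : k < p) : ‖(k.factorial : ℚ_[p])‖ = 1 := by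
  rw [Padic.norm_natCast_eq_one_iff, Nat.Prime.coprime_iff_not_dvd Fact.out,
    Nat.Prime.dvd_factorial Fact.out]
  omega

lemma norm_le_one_of_eq_natCast_div {x : ℚ_[p]} {u v : ℕ} (hx : x = u / v) (hv : ¬p ∣ v) :
    ‖x‖ ≤ 1 := by
  rw [hx, norm_div,
    Padic.norm_natCast_eq_one_iff.mpr ((Nat.Prime.coprime_iff_not_dvd Fact.out).mpr hv), div_one]
  exact IsUltrametricDist.norm_natCast_le_one ℚ_[p] u

lemma norm_rf_eq_ite {x : ℚ_[p]} {u v j₀ w : ℕ} (hx : x = u / v) (hv : ¬p ∣ v)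
    (hroot : u + v * j₀ = p * w) (hw : ¬p ∣ w) (hj₀ : j₀ < p) {k : ℕ} (hk : k ≤ p) :
    ‖rf x k‖ = if j₀ < k then (p : ℝ)⁻¹ else 1 := by
  have hcop : ∀ {m : ℕ}, ¬p ∣ m → p.Coprime m := (Nat.Prime.coprime_iff_not_dvd Fact.out).mpr
  have hv1 : ‖(v : ℚ_[p])‖ = 1 := Padic.norm_natCast_eq_one_iff.mpr (hcop hv)
  have hfac : ∀ j : ℕ, ‖x + j‖ = ‖((u + v * j : ℕ) : ℚ_[p])‖ := fun j ↦ by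
    rw [hx, div_add' _ _ _ (norm_ne_zero_iff.mp (by rw [hv1]; exact one_ne_zero)), norm_div, hv1,
      div_one]
    push_cast
    ring_nf
  have hunit : ∀ j < p, j ≠ j₀ → ‖x + j‖ = 1 := fun j hj hne ↦ by
    rw [hfac, Padic.norm_natCast_eq_one_iff]
    refine hcop fun hdvd ↦ hne (Nat.ModEq.eq_of_lt_of_lt ?_ hj hj₀)
    refine Nat.ModEq.cancel_left_of_coprime (c := v) (hcop hv) (Nat.ModEq.add_left_cancel' u ?_)
    exact (Nat.modEq_zero_iff_dvd.mpr hdvd).trans (Nat.modEq_zero_iff_dvd.mpr ⟨w, hroot⟩).symm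
  have hroot' : ‖x + j₀‖ = (p : ℝ)⁻¹ := by
    rw [hfac, hroot, Nat.cast_mul, norm_mul, Padic.norm_p,
      Padic.norm_natCast_eq_one_iff.mpr (hcop hw), mul_one]
  rw [rf, norm_prod]
  split_ifs with h
  · rw [prod_eq_single j₀ (fun j hj hne ↦ hunit j (by simp at hj; omega) hne) (by simp [h])]
    exact hroot'
  · exact prod_eq_one fun j hj ↦ hunit j (by simp at hj; omega) (by simp at hj; omega)

end Pochhammer

section Term

variable {p : ℕ} [Fact p.Prime]

noncomputable def f54Term (a b c : ℚ_[p]) (k : ℕ) : ℚ_[p] :=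
  rf a k ^ 4 * rf b k / (rf c k * (k.factorial : ℚ_[p]) ^ 4)

lemma f54Term_add (a b c : ℚ_[p]) (k L : ℕ) :
    f54Term a b c (k + L) = f54Term a b c k *
      (rf (a + (k : ℚ_[p])) L ^ 4 * rf (b + (k : ℚ_[p])) L /
        (rf (c + (k : ℚ_[p])) L * rf (1 + (k : ℚ_[p])) L ^ 4)) := by
  simp only [f54Term, ← rf_one, rf_add]
  ring

lemma norm_f54Term (a b c : ℚ_[p]) {k : ℕ} (hk : k < p) :
    ‖f54Term a b c k‖ = ‖rf a k‖ ^ 4 * ‖rf b k‖ / ‖rf c k‖ := by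
  simp [f54Term, norm_factorial_eq_one hk]

/-- The factors `(a + k)_L` and `(1 + k)_L` of `f54Term (k + L) / f54Term k` are congruent to
each other up to the sign `(-1)^L = -1` modulo `p`, and so are `(b + k)_L` and `(c + k)_L`; hence
that ratio is `≡ -1 (mod p)`. -/
lemma norm_f54Term_add_f54Term_le {a b c : ℚ_[p]} {k L : ℕ} (ha : ‖a‖ ≤ 1) (hb : ‖b‖ ≤ 1)
    (hc : ‖c‖ ≤ 1) (hL : Odd L) (hkL : k + L < p) (ha' : ‖a + 2 * k + L‖ ≤ (p : ℝ)⁻¹)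
    (hbc : ‖b + c + 2 * k + L - 1‖ ≤ (p : ℝ)⁻¹) (hc0 : rf c k ≠ 0)
    (hcL : ‖rf c (k + L)‖ = ‖rf c k‖) :
    ‖f54Term a b c k + f54Term a b c (k + L)‖ ≤ ‖f54Term a b c k‖ * (p : ℝ)⁻¹ := by
  set X := rf (a + (k : ℚ_[p])) L
  set Y := rf (b + (k : ℚ_[p])) L
  set Z := rf (c + (k : ℚ_[p])) L
  set W := rf (1 + (k : ℚ_[p])) L
  have hZ : ‖Z‖ = 1 := by
    rw [rf_add, norm_mul] at hcL
    exact (mul_eq_left₀ (norm_ne_zero_iff.mpr hc0)).mp hcL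
  have hW : ‖W‖ = 1 := by
    have h := congrArg norm (rf_add (1 : ℚ_[p]) k L)
    rwa [rf_one, rf_one, norm_mul, norm_factorial_eq_one hkL, norm_factorial_eq_one (by omega),
      one_mul, eq_comm] at h
  have hp0 : (0 : ℝ) ≤ (p : ℝ)⁻¹ := by positivity
  have hXW : ‖X + W‖ ≤ (p : ℝ)⁻¹ := by
    have h := norm_rf_sub_neg_one_pow_mul_rf_le (L := L) hp0 (norm_add_natCast_le_one ha k)
      (norm_add_natCast_le_one (x := (1 : ℚ_[p])) norm_one.le k)
      (by rw [show a + k + (1 + k) + L - 1 = a + 2 * k + L by ring]; exact ha')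
    rwa [hL.neg_one_pow, neg_one_mul, sub_neg_eq_add] at h
  have hYZ : ‖Y + Z‖ ≤ (p : ℝ)⁻¹ := by
    have h := norm_rf_sub_neg_one_pow_mul_rf_le (L := L) hp0 (norm_add_natCast_le_one hb k)
      (norm_add_natCast_le_one hc k)
      (by rw [show b + k + (c + k) + L - 1 = b + c + 2 * k + L - 1 by ring]; exact hbc)
    rwa [hL.neg_one_pow, neg_one_mul, sub_neg_eq_add] at h
  have hE := norm_mul_pow_four_add_pow_four_mul_le
    (norm_rf_le_one (norm_add_natCast_le_one ha k) L) hZ.le hW.le hXW hYZ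
  have hZ0 : Z ≠ 0 := norm_ne_zero_iff.mp (by rw [hZ]; exact one_ne_zero)
  have hW0 : W ≠ 0 := norm_ne_zero_iff.mp (by rw [hW]; exact one_ne_zero)
  have hsum : f54Term a b c k + f54Term a b c (k + L)
      = f54Term a b c k * ((Z * W ^ 4 + X ^ 4 * Y) / (Z * W ^ 4)) := by
    rw [f54Term_add, add_div, div_self (mul_ne_zero hZ0 (pow_ne_zero 4 hW0))]
    ring
  rw [hsum, norm_mul, norm_div, norm_mul, norm_pow, hZ, hW, one_pow, mul_one, div_one]
  exact mul_le_mul_of_nonneg_left hE (norm_nonneg _)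

end Term

lemma two_mul_lt_of_eq_two_mul_mul_add_one {p n M : ℕ} (hP : p = 2 * n * M + 1) (hM : 0 < M) :
    2 * n < p := by
  rw [hP]; nlinarith

section Series

variable {p n M : ℕ} [Fact p.Prime]

noncomputable def summand (n : ℕ) (k : ℕ) : ℚ_[p] :=
  f54Term (1 / (n : ℚ_[p])) ((2 * (n : ℚ_[p]) - 3) / (2 * (n : ℚ_[p]))) (5 / (2 * (n : ℚ_[p]))) k

lemma two_mul_sub_three_div_eq_natCast_div (hn : 2 ≤ n) :
    (2 * (n : ℚ_[p]) - 3) / (2 * (n : ℚ_[p]))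
      = ((2 * n - 3 : ℕ) : ℚ_[p]) / ((2 * n : ℕ) : ℚ_[p]) := by
  push_cast [Nat.cast_sub (by omega : 3 ≤ 2 * n)]
  rfl

lemma norm_rf_one_div (hP : p = 2 * n * M + 1) (hn : 2 ≤ n) (hM : 0 < M) {k : ℕ} (hk : k ≤ p) :
    ‖rf (1 / (n : ℚ_[p])) k‖ = if 2 * M < k then (p : ℝ)⁻¹ else 1 := by
  have h2n := two_mul_lt_of_eq_two_mul_mul_add_one hP hM
  exact norm_rf_eq_ite (u := 1) (v := n) (j₀ := 2 * M) (w := 1) (by simp)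
    (Nat.not_dvd_of_pos_of_lt (by omega) (by omega)) (by rw [hP]; ring)
    (Nat.Prime.not_dvd_one Fact.out) (by rw [hP]; nlinarith) hk

lemma norm_rf_two_sub_three_div (hP : p = 2 * n * M + 1) (hn : 2 ≤ n) (hM : 0 < M) {k : ℕ}
    (hk : k ≤ p) :
    ‖rf ((2 * (n : ℚ_[p]) - 3) / (2 * (n : ℚ_[p]))) k‖
      = if (2 * n - 3) * M < k then (p : ℝ)⁻¹ else 1 := by
  have h2n := two_mul_lt_of_eq_two_mul_mul_add_one hP hM
  have hle : (2 * n - 3) * M ≤ 2 * n * M := Nat.mul_le_mul_right _ (Nat.sub_le _ _)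
  have hu : ¬p ∣ 2 * n - 3 := Nat.not_dvd_of_pos_of_lt (by omega) (by omega)
  refine norm_rf_eq_ite (j₀ := (2 * n - 3) * M) (two_mul_sub_three_div_eq_natCast_div hn)
    (Nat.not_dvd_of_pos_of_lt (by omega) h2n) ?_ hu (by omega) hk
  rw [hP]; ring

lemma norm_rf_five_div (hP : p = 2 * n * M + 1) (hn : 2 ≤ n) (hM : 0 < M) (h5 : 5 * M < p)
    {k : ℕ} (hk : k ≤ p) :
    ‖rf (5 / (2 * (n : ℚ_[p]))) k‖ = if 5 * M < k then (p : ℝ)⁻¹ else 1 := by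
  have h2n := two_mul_lt_of_eq_two_mul_mul_add_one hP hM
  have h5p : ¬p ∣ 5 := fun h ↦ by
    have := (Nat.prime_dvd_prime_iff_eq Fact.out Nat.prime_five).mp h
    omega
  exact norm_rf_eq_ite (u := 5) (v := 2 * n) (w := 5) (by push_cast; rfl)
    (Nat.not_dvd_of_pos_of_lt (by omega) h2n) (by rw [hP]; ring) h5p h5 hk

lemma norm_rf_five_div_four (hP : p = 4 * M + 1) (hM : 0 < M) {k : ℕ} (hk : k ≤ p) :
    ‖rf (5 / (2 * ((2 : ℕ) : ℚ_[p]))) k‖ = if M - 1 < k then (p : ℝ)⁻¹ else 1 :=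
  norm_rf_eq_ite (u := 5) (v := 4) (w := 1) (by push_cast; norm_num)
    (Nat.not_dvd_of_pos_of_lt (by omega) (by omega)) (by omega) (Nat.Prime.not_dvd_one Fact.out)
    (by omega) hk

lemma norm_summand_le (hP : p = 2 * n * M + 1) (hn : 2 ≤ n) (hM : 0 < M) {k : ℕ}
    (hk : 2 * M < k) (hkp : k < p) (hgood : k ≤ 5 * M ∨ p + 2 * M - k ≤ 5 * M) :
    ‖(summand n k : ℚ_[p])‖ ≤ ((p : ℝ)⁻¹) ^ 4 := by
  have hp0 : (0 : ℝ) < (p : ℝ)⁻¹ := inv_pos.mpr (by exact_mod_cast (Fact.out : p.Prime).pos)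
  have hp1 : (p : ℝ)⁻¹ ≤ 1 := inv_le_one_of_one_le₀ (by exact_mod_cast (Fact.out : p.Prime).one_le)
  have hmul : (2 * n - 3) * M + 3 * M = 2 * n * M := by
    rw [← Nat.add_mul, Nat.sub_add_cancel (by omega)]
  have key : ‖rf ((2 * (n : ℚ_[p]) - 3) / (2 * (n : ℚ_[p]))) k‖ ≤ ‖rf (5 / (2 * (n : ℚ_[p]))) k‖
      ∧ 0 < ‖rf (5 / (2 * (n : ℚ_[p]))) k‖ := by
    rw [norm_rf_two_sub_three_div hP hn hM hkp.le]
    rcases (show n = 2 ∨ 3 ≤ n by omega) with rfl | hn3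
    · rw [norm_rf_five_div_four (by omega) hM hkp.le, if_pos (by omega), if_pos (by omega)]
      exact ⟨le_rfl, hp0⟩
    · have h5 : 5 * M < p := by rw [hP]; nlinarith
      rw [norm_rf_five_div hP hn hM h5 hkp.le]
      by_cases hk5 : 5 * M < k
      · rw [if_pos hk5, if_pos (by omega)]
        exact ⟨le_rfl, hp0⟩
      · rw [if_neg hk5]
        split_ifs
        exacts [⟨hp1, one_pos⟩, ⟨le_rfl, one_pos⟩]
  rw [summand, norm_f54Term _ _ _ hkp, norm_rf_one_div hP hn hM hkp.le, if_pos hk]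
  calc ((p : ℝ)⁻¹) ^ 4 * ‖rf ((2 * (n : ℚ_[p]) - 3) / (2 * (n : ℚ_[p]))) k‖
        / ‖rf (5 / (2 * (n : ℚ_[p]))) k‖
      ≤ ((p : ℝ)⁻¹) ^ 4 * ‖rf (5 / (2 * (n : ℚ_[p]))) k‖ / ‖rf (5 / (2 * (n : ℚ_[p]))) k‖ := by
        gcongr; exact key.1
    _ = ((p : ℝ)⁻¹) ^ 4 := mul_div_cancel_right₀ _ key.2.ne'

lemma norm_one_div_add_le (hP : p = 2 * n * M + 1) (hn : 0 < n) (hM : 0 < M) :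
    ‖1 / (n : ℚ_[p]) + (p + 2 * M)‖ ≤ (p : ℝ)⁻¹ := by
  have hn0 : (n : ℚ_[p]) ≠ 0 := Nat.cast_ne_zero.mpr hn.ne'
  have hcast : (p : ℚ_[p]) = 2 * n * M + 1 := by exact_mod_cast hP
  have hdn : ¬p ∣ n := Nat.not_dvd_of_pos_of_lt hn (by rw [hP]; nlinarith)
  rw [show 1 / (n : ℚ_[p]) + (p + 2 * M) = p * (((1 + n : ℕ) : ℚ_[p]) / n) by
    field_simp; push_cast; rw [hcast]; ring, norm_mul, Padic.norm_p]
  exact mul_le_of_le_one_right (by positivity) (norm_le_one_of_eq_natCast_div rfl hdn)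

lemma norm_summand_add_summand_le (hP : p = 2 * n * M + 1) (hn : 2 ≤ n) (hM : 0 < M) {k l : ℕ}
    (hkl : k + l = p + 2 * M) (hk : 5 * M < k) (hlt : k < l) :
    ‖(summand n k + summand n l : ℚ_[p])‖ ≤ ((p : ℝ)⁻¹) ^ 4 := by
  obtain ⟨L, rfl⟩ : ∃ L, l = k + L := ⟨l - k, by omega⟩
  have hkL : k + L < p := by omega
  have h5 : 5 * M < p := by omega
  have hkb : k ≤ (2 * n - 3) * M := by
    have h1 : 2 * ((n + 1) * M) = 2 * n * M + 2 * M := by ring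
    have hn4 : 5 < n + 1 := Nat.lt_of_mul_lt_mul_right (a := M) (by omega)
    have := Nat.mul_le_mul_right M (show n + 1 ≤ 2 * n - 3 by omega)
    omega
  have hodd : Odd L := ⟨n * M + M - k, by
    have : 2 * n * M = 2 * (n * M) := by ring
    omega⟩
  have h2n := two_mul_lt_of_eq_two_mul_mul_add_one hP hM
  have hd2n : ¬p ∣ 2 * n := Nat.not_dvd_of_pos_of_lt (by omega) h2n
  have hn0 : (n : ℚ_[p]) ≠ 0 := Nat.cast_ne_zero.mpr (by omega)
  have hpR : (p : ℝ) ≠ 0 := by exact_mod_cast (Fact.out : p.Prime).ne_zero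
  have hsum : (2 * k + L : ℚ_[p]) = p + 2 * M := by
    exact_mod_cast (by omega : 2 * k + L = p + 2 * M)
  have hc : ∀ j, 5 * M < j → j ≤ p → ‖rf (5 / (2 * (n : ℚ_[p]))) j‖ = (p : ℝ)⁻¹ :=
    fun j hj hjp ↦ by rw [norm_rf_five_div hP hn hM h5 hjp, if_pos hj]
  have hpair := norm_f54Term_add_f54Term_le
    (norm_le_one_of_eq_natCast_div (x := 1 / (n : ℚ_[p])) (u := 1) (v := n) (by simp)
      (Nat.not_dvd_of_pos_of_lt (by omega) (by omega)))
    (norm_le_one_of_eq_natCast_div (two_mul_sub_three_div_eq_natCast_div hn) hd2n)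
    (norm_le_one_of_eq_natCast_div (x := 5 / (2 * (n : ℚ_[p]))) (u := 5) (v := 2 * n)
      (by push_cast; rfl) hd2n) hodd hkL
    (by rw [add_assoc, hsum]; exact norm_one_div_add_le hP (by omega) hM)
    (by
      rw [show (2 * (n : ℚ_[p]) - 3) / (2 * n) + 5 / (2 * n) + 2 * k + L - 1
          = 1 / n + (2 * k + L) by field_simp; ring, hsum]
      exact norm_one_div_add_le hP (by omega) hM)
    (norm_ne_zero_iff.mp (by rw [hc k hk (by omega)]; exact inv_ne_zero hpR))
    (by rw [hc (k + L) (by omega) hkL.le, hc k hk (by omega)])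
  have hterm : ‖(summand n k : ℚ_[p])‖ = ((p : ℝ)⁻¹) ^ 4 * (p : ℝ) := by
    rw [summand, norm_f54Term _ _ _ (by omega), norm_rf_one_div hP hn hM (by omega),
      if_pos (by omega), norm_rf_two_sub_three_div hP hn hM (by omega), if_neg (by omega),
      hc k hk (by omega),
      mul_one, div_inv_eq_mul]
  refine hpair.trans_eq ?_
  change ‖(summand n k : ℚ_[p])‖ * (p : ℝ)⁻¹ = _
  rw [hterm, mul_assoc, mul_inv_cancel₀ hpR, mul_one]

lemma norm_summand_add_summand_reflect_le (hP : p = 2 * n * M + 1) (hn : 2 ≤ n) (hM : 0 < M)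
    {k : ℕ} (hk : 2 * M < k) (hkp : k < p) :
    ‖(summand n k + summand n (p + 2 * M - k) : ℚ_[p])‖ ≤ ((p : ℝ)⁻¹) ^ 4 := by
  have hodd : p = 2 * (n * M) + 1 := by rw [hP]; ring
  by_cases hgood : k ≤ 5 * M ∨ p + 2 * M - k ≤ 5 * M
  · refine (IsUltrametricDist.norm_add_le_max _ _).trans
      (max_le (norm_summand_le hP hn hM hk hkp hgood)
        (norm_summand_le hP hn hM (by omega) (by omega) ?_))
    rw [Nat.sub_sub_self (by omega)]
    exact hgood.symm
  · push Not at hgood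
    rcases lt_or_gt_of_ne (show k ≠ p + 2 * M - k by omega) with hlt | hgt
    · exact norm_summand_add_summand_le hP hn hM (by omega) hgood.1 hlt
    · rw [add_comm]
      exact norm_summand_add_summand_le hP hn hM (by omega) hgood.2 hgt

/-- The reflection `k ↦ p + 2M - k` is an involution of `[2M + 1, p)`, so twice the tail sum is the
sum of the pairs `summand k + summand (p + 2M - k)`, and `2` is a `p`-adic unit. -/
lemma norm_sum_Ico_summand_le (hP : p = 2 * n * M + 1) (hn : 2 ≤ n) (hM : 0 < M) :
    ‖∑ k ∈ Ico (2 * M + 1) p, (summand n k : ℚ_[p])‖ ≤ ((p : ℝ)⁻¹) ^ 4 := by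
  have hreflect : ∑ k ∈ Ico (2 * M + 1) p, (summand n (p + 2 * M - k) : ℚ_[p])
      = ∑ k ∈ Ico (2 * M + 1) p, summand n k := by
    rw [sum_Ico_reflect _ _ (by omega), show p + 2 * M + 1 - p = 2 * M + 1 by omega,
      show p + 2 * M + 1 - (2 * M + 1) = p by omega]
  have hodd : p = 2 * (n * M) + 1 := by rw [hP]; ring
  have h2 : ‖(2 : ℚ_[p])‖ = 1 := by
    rw [← Nat.cast_ofNat, Padic.norm_natCast_eq_one_iff,
      Nat.coprime_primes Fact.out Nat.prime_two]
    omega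
  calc ‖∑ k ∈ Ico (2 * M + 1) p, (summand n k : ℚ_[p])‖
      = ‖∑ k ∈ Ico (2 * M + 1) p, (summand n k + summand n (p + 2 * M - k) : ℚ_[p])‖ := by
        rw [sum_add_distrib, hreflect, ← two_mul, norm_mul, h2, one_mul]
    _ ≤ ((p : ℝ)⁻¹) ^ 4 := by
        refine IsUltrametricDist.norm_sum_le_of_forall_le_of_nonneg (by positivity) fun k hk ↦ ?_
        rw [mem_Ico] at hk
        exact norm_summand_add_summand_reflect_le hP hn hM hk.1 hk.2

end Series

lemma exists_eq_pow_mul_of_norm_le {p : ℕ} [Fact p.Prime] {x : ℚ_[p]} {m : ℕ}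
    (hx : ‖x‖ ≤ ((p : ℝ)⁻¹) ^ m) : ∃ z : ℤ_[p], x = (p : ℚ_[p]) ^ m * z := by
  have hp : (p : ℚ_[p]) ^ m ≠ 0 :=
    pow_ne_zero _ (Nat.cast_ne_zero.mpr (Fact.out : p.Prime).ne_zero)
  refine ⟨⟨x / (p : ℚ_[p]) ^ m, ?_⟩, (mul_div_cancel₀ x hp).symm⟩
  rw [norm_div, norm_pow, Padic.norm_p,
    div_le_one (pow_pos (inv_pos.mpr (by exact_mod_cast (Fact.out : p.Prime).pos)) m)]
  exact hx

theorem stmt7_general (n p : ℕ) [Fact p.Prime] (hn : 2 ≤ n)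
    (hpn : p % (2 * n) = 1) :
    ∃ z : ℤ_[p],
      (∑ k ∈ Finset.range p,
        rf (1 / (n : ℚ_[p])) k ^ 4 *
          rf ((2 * (n : ℚ_[p]) - 3) / (2 * (n : ℚ_[p]))) k /
          (rf (5 / (2 * (n : ℚ_[p]))) k * (k.factorial : ℚ_[p]) ^ 4))
      - (∑ k ∈ Finset.range ((p - 1) / n + 1),
          rf (1 / (n : ℚ_[p])) k ^ 4 *
            rf ((2 * (n : ℚ_[p]) - 3) / (2 * (n : ℚ_[p]))) k /
            (rf (5 / (2 * (n : ℚ_[p]))) k * (k.factorial : ℚ_[p]) ^ 4))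
      = (p : ℚ_[p]) ^ 4 * (z : ℚ_[p]) := by
  obtain ⟨M, hP⟩ : ∃ M, p = 2 * n * M + 1 :=
    ⟨p / (2 * n), by have := Nat.div_add_mod p (2 * n); omega⟩
  have hM : 0 < M :=
    Nat.pos_of_ne_zero fun h ↦ (Fact.out : p.Prime).ne_one (by simpa [h] using hP)
  have hidx : (p - 1) / n + 1 = 2 * M + 1 := by
    rw [hP, Nat.add_sub_cancel, show 2 * n * M = n * (2 * M) by ring,
      Nat.mul_div_cancel_left _ (by omega)]
  change ∃ z : ℤ_[p], ∑ k ∈ range p, summand n k - ∑ k ∈ range ((p - 1) / n + 1), summand n k = _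
  rw [hidx, ← sum_Ico_eq_sub _ (by rw [hP]; nlinarith)]
  exact exists_eq_pow_mul_of_norm_le (norm_sum_Ico_summand_le hP hn hM)

/-- For an integer `n ≥ 2` and a prime `p ≥ 7` with `p ≡ 1 (mod 2n)`, in `ℚ_p`,
`∑_{k=0}^{p-1} (1/n)_k⁴ ((2n-3)/(2n))_k / ((5/(2n))_k (k!)⁴)
≡ ∑_{k=0}^{(p-1)/n} (1/n)_k⁴ ((2n-3)/(2n))_k / ((5/(2n))_k (k!)⁴) (mod p⁴)`,
i.e. the difference of the two truncated sums lies in `p⁴ ℤ_p`. -/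
theorem stmt7 (n p : ℕ) [Fact p.Prime] (hn : 2 ≤ n) (hp : 7 ≤ p)
    (hpn : p % (2 * n) = 1) :
    ∃ z : ℤ_[p],
      (∑ k ∈ Finset.range p,
        rf (1 / (n : ℚ_[p])) k ^ 4 *
          rf ((2 * (n : ℚ_[p]) - 3) / (2 * (n : ℚ_[p]))) k /
          (rf (5 / (2 * (n : ℚ_[p]))) k * (k.factorial : ℚ_[p]) ^ 4))
      - (∑ k ∈ Finset.range ((p - 1) / n + 1),
          rf (1 / (n : ℚ_[p])) k ^ 4 *
            rf ((2 * (n : ℚ_[p]) - 3) / (2 * (n : ℚ_[p]))) k /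
            (rf (5 / (2 * (n : ℚ_[p]))) k * (k.factorial : ℚ_[p]) ^ 4))
      = (p : ℚ_[p]) ^ 4 * (z : ℚ_[p]) :=
  stmt7_general n p hn hpn
end

section
/- Let n be an even integer with n ≥ 2 and n ≠ 4, and let p ≥ 7 be a prime with p ≡ 1 (mod n) but p ≢ 1 (mod 2n). Then for all x, y ∈ pℤ_p: ∑_{k=0}^{(p-1)/n} [ (1/n)_k · ((2n-3)/(2n))_k · ((1-x)/n)_k · ((1-y)/n)_k · ((1-p)/n)_k ] / [ (5/(2n))_k · (1 + x/n)_k · (1 + y/n)_k · (1 + p/n)_k · k! ] ∈ pℤ_p. -/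
/-!
Each parameter is a `p`-adic integer, and so is each summand, its denominator being a unit; so
the sum can be reduced modulo `p`. Write `m = (p - 1) / n`, which is odd. Since `n m ≡ -1`, the
parameters `1/n`, `(1-x)/n`, `(1-y)/n`, `(1-p)/n` all reduce to `-m` and `1 + x/n`, `1 + y/n`,
`1 + p/n` to `1`, so the `k`-th summand reduces to `C(m,k)^4 (β)_k / (γ)_k` with
`β = (2n-3)/(2n)` and `γ = 5/(2n)`. As `β + γ + m ≡ 1`, the reflection `k ↦ m - k` fixes `C(m,k)`
and multiplies `(β)_k / (γ)_k` by `(-1)^m = -1`, so the reduced sum vanishes. The arithmetic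
input is that `(γ)_m` is a unit, i.e. `p ∤ 5 + 2nj` for `j < m`.
-/

open Finset Polynomial

section Pochhammer

variable {R : Type*} [CommRing R]

lemma ascPochhammer_eval_eq_prod_range (k : ℕ) (r : R) :
    (ascPochhammer R k).eval r = ∏ j ∈ range k, (r + j) := by
  induction k with
  | zero => simp
  | succ k ih => rw [ascPochhammer_succ_eval, ih, prod_range_succ]

lemma ascPochhammer_eval_add (k l : ℕ) (r : R) :
    (ascPochhammer R (k + l)).eval r
      = (ascPochhammer R k).eval r * (ascPochhammer R l).eval (r + k) := by
  rw [← ascPochhammer_mul, eval_mul, eval_comp]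
  simp

lemma ascPochhammer_eval_neg_natCast (m k : ℕ) :
    (ascPochhammer R k).eval (-(m : R)) = (-1) ^ k * k.factorial * m.choose k := by
  rw [ascPochhammer_eval_neg_eq_descPochhammer, descPochhammer_eval_eq_descFactorial,
    Nat.descFactorial_eq_factorial_mul_choose]
  push_cast
  ring

lemma ascPochhammer_eval_reflect {b c : R} {m : ℕ} (hbc : b + c + m = 1) :
    (ascPochhammer R m).eval b = (-1) ^ m * (ascPochhammer R m).eval c := by
  rw [show b = -(c + m - 1) by linear_combination hbc, ascPochhammer_eval_neg_eq_descPochhammer,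
    descPochhammer_eval_eq_ascPochhammer]
  ring_nf

lemma ascPochhammer_eval_mul_eq_of_add_eq_one {b c : R} {k l : ℕ}
    (hbc : b + c + ((k + l : ℕ) : R) = 1) :
    (ascPochhammer R l).eval b * (ascPochhammer R k).eval c
      = (-1) ^ k * (ascPochhammer R (k + l)).eval b := by
  have hsplit := ascPochhammer_eval_add k l c
  have hrefl := ascPochhammer_eval_reflect (m := l) (b := c + k) (c := b)
    (by push_cast at hbc; linear_combination hbc)
  have hsq : ((-1 : R) ^ (k + l)) ^ 2 = 1 := by rw [← pow_mul, pow_mul', neg_one_sq, one_pow]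
  rw [ascPochhammer_eval_reflect hbc, hsplit, hrefl]
  linear_combination (-(ascPochhammer R l).eval b * (ascPochhammer R k).eval c) * hsq

end Pochhammer

section PochhammerField

variable {F : Type*} [Field F]

lemma ascPochhammer_eval_ne_zero_of_le {c : F} {k m : ℕ} (hkm : k ≤ m)
    (hc : (ascPochhammer F m).eval c ≠ 0) : (ascPochhammer F k).eval c ≠ 0 := by
  obtain ⟨l, rfl⟩ := Nat.exists_eq_add_of_le hkm
  exact left_ne_zero_of_mul (ascPochhammer_eval_add k l c ▸ hc)

lemma ascPochhammer_eval_div_reflect {b c : F} {k l : ℕ} (hbc : b + c + ((k + l : ℕ) : F) = 1)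
    (hc : (ascPochhammer F (k + l)).eval c ≠ 0) :
    (ascPochhammer F l).eval b / (ascPochhammer F l).eval c
      = (-1) ^ (k + l) * ((ascPochhammer F k).eval b / (ascPochhammer F k).eval c) := by
  have hk := ascPochhammer_eval_ne_zero_of_le (Nat.le_add_right k l) hc
  have hl := ascPochhammer_eval_ne_zero_of_le (Nat.le_add_left l k) hc
  have e1 := ascPochhammer_eval_mul_eq_of_add_eq_one hbc
  have e2 := ascPochhammer_eval_mul_eq_of_add_eq_one (b := c) (c := b) (k := k) (l := l)
    (by linear_combination hbc)
  rw [div_eq_iff hl, mul_div_assoc', div_mul_eq_mul_div, eq_div_iff hk]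
  linear_combination e1 - (-1) ^ (k + l) * e2 + (-1) ^ k * ascPochhammer_eval_reflect hbc

lemma sum_choose_pow_mul_ascPochhammer_div_eq_zero {b c : F} {m : ℕ} (hm : Odd m)
    (hbc : b + c + m = 1) (hc : (ascPochhammer F m).eval c ≠ 0) (r : ℕ) :
    ∑ k ∈ range (m + 1),
      (m.choose k : F) ^ r * ((ascPochhammer F k).eval b / (ascPochhammer F k).eval c) = 0 := by
  refine sum_involution (fun k _ => m - k) (fun k hk => ?_) (fun k hk _ => ?_)
    (fun k hk => by simp only [mem_range] at hk ⊢; omega)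
    (fun k hk => by simp only [mem_range] at hk; omega)
  · simp only [mem_range] at hk
    have hkl : k + (m - k) = m := by omega
    rw [Nat.choose_symm (by omega), ascPochhammer_eval_div_reflect (k := k) (l := m - k)
      (by rwa [hkl]) (by rwa [hkl]), hkl, hm.neg_one_pow]
    ring
  · obtain ⟨j, rfl⟩ := hm
    omega

end PochhammerField

namespace Padic

variable {p : ℕ} [Fact p.Prime]

def HasResidue (a : ℚ_[p]) (r : ZMod p) : Prop :=
  ∃ A : ℤ_[p], (A : ℚ_[p]) = a ∧ PadicInt.toZMod A = r

namespace HasResidue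

variable {a b : ℚ_[p]} {r s : ZMod p}

lemma natCast (k : ℕ) : HasResidue (k : ℚ_[p]) k :=
  ⟨k, PadicInt.coe_natCast k, map_natCast _ k⟩

lemma ofNat (k : ℕ) [k.AtLeastTwo] : HasResidue (OfNat.ofNat k : ℚ_[p]) (OfNat.ofNat k) := by
  have h := natCast (p := p) (OfNat.ofNat k)
  rwa [Nat.cast_ofNat, Nat.cast_ofNat] at h

lemma one : HasResidue (1 : ℚ_[p]) 1 := by
  simpa using natCast (p := p) 1

lemma p_mul (s : ℤ_[p]) : HasResidue ((p : ℚ_[p]) * (s : ℚ_[p])) 0 :=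
  ⟨p * s, by simp, by simp⟩

lemma add (ha : HasResidue a r) (hb : HasResidue b s) : HasResidue (a + b) (r + s) := by
  obtain ⟨A, rfl, rfl⟩ := ha
  obtain ⟨B, rfl, rfl⟩ := hb
  exact ⟨A + B, PadicInt.coe_add A B, map_add _ A B⟩

lemma sub (ha : HasResidue a r) (hb : HasResidue b s) : HasResidue (a - b) (r - s) := by
  obtain ⟨A, rfl, rfl⟩ := ha
  obtain ⟨B, rfl, rfl⟩ := hb
  exact ⟨A - B, PadicInt.coe_sub A B, map_sub _ A B⟩

lemma mul (ha : HasResidue a r) (hb : HasResidue b s) : HasResidue (a * b) (r * s) := by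
  obtain ⟨A, rfl, rfl⟩ := ha
  obtain ⟨B, rfl, rfl⟩ := hb
  exact ⟨A * B, PadicInt.coe_mul A B, map_mul _ A B⟩

lemma inv (ha : HasResidue a r) (hr : r ≠ 0) : HasResidue a⁻¹ r⁻¹ := by
  obtain ⟨A, rfl, rfl⟩ := ha
  have hA : IsUnit A := by
    by_contra hA
    have hker : A ∈ RingHom.ker (PadicInt.toZMod (p := p)) := by
      rw [PadicInt.ker_toZMod]
      exact hA
    exact hr hker
  exact ⟨↑hA.unit⁻¹, map_units_inv (PadicInt.Coe.ringHom (p := p)) hA.unit,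
    map_units_inv (PadicInt.toZMod (p := p)) hA.unit⟩

lemma div (ha : HasResidue a r) (hb : HasResidue b s) (hs : s ≠ 0) :
    HasResidue (a / b) (r / s) := by
  simpa only [div_eq_mul_inv] using ha.mul (hb.inv hs)

lemma prod {ι : Type*} {t : Finset ι} {f : ι → ℚ_[p]} {g : ι → ZMod p}
    (h : ∀ i ∈ t, HasResidue (f i) (g i)) :
    HasResidue (∏ i ∈ t, f i) (∏ i ∈ t, g i) := by
  classical
  induction t using Finset.induction_on with
  | empty => simpa using one
  | insert i t hi ih =>
    rw [prod_insert hi, prod_insert hi]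
    exact (h i (mem_insert_self i t)).mul (ih fun j hj => h j (mem_insert_of_mem hj))

lemma sum {ι : Type*} {t : Finset ι} {f : ι → ℚ_[p]} {g : ι → ZMod p}
    (h : ∀ i ∈ t, HasResidue (f i) (g i)) :
    HasResidue (∑ i ∈ t, f i) (∑ i ∈ t, g i) := by
  classical
  induction t using Finset.induction_on with
  | empty => simpa using natCast (p := p) 0
  | insert i t hi ih =>
    rw [sum_insert hi, sum_insert hi]
    exact (h i (mem_insert_self i t)).add (ih fun j hj => h j (mem_insert_of_mem hj))

lemma rf (ha : HasResidue a r) (k : ℕ) :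
    HasResidue (rf a k) ((ascPochhammer (ZMod p) k).eval r) := by
  rw [ascPochhammer_eval_eq_prod_range]
  exact prod fun j _ => ha.add (natCast j)

lemma exists_eq_p_mul (ha : HasResidue a 0) : ∃ c : ℤ_[p], a = p * c := by
  obtain ⟨A, rfl, hA⟩ := ha
  have hmem : A ∈ Ideal.span {(p : ℤ_[p])} := by
    rw [← PadicInt.maximalIdeal_eq_span_p, ← PadicInt.ker_toZMod]
    exact hA
  obtain ⟨c, rfl⟩ := Ideal.mem_span_singleton'.mp hmem
  exact ⟨c, by push_cast; ring⟩

end HasResidue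

end Padic

section Arithmetic

variable {p n m : ℕ}

lemma odd_of_eq_mul_add_one (hpm : p = n * m + 1) (hn : 0 < n) (hp : ¬ p % (2 * n) = 1) :
    Odd m := by
  rw [← Nat.not_even_iff_odd]
  rintro ⟨w, rfl⟩
  apply hp
  rw [hpm, show n * (w + w) = 2 * n * w by ring, Nat.mul_add_mod]
  exact Nat.mod_eq_of_lt (by omega)

lemma not_dvd_five_add_two_mul_mul (hpm : p = n * m + 1) (hn2 : 2 ≤ n) (hn : Even n)
    (hn4 : n ≠ 4) (hm : Odd m) {j : ℕ} (hj : j < m) : ¬ p ∣ 5 + 2 * n * j := by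
  rintro ⟨t, ht⟩
  -- `5 + 2nj < 2p`, so `5 + 2nj = p = nm + 1`, which forces `n ∣ 4`
  have hjm : n * j + n ≤ n * m := by simpa [Nat.mul_succ] using Nat.mul_le_mul_left n hj
  obtain rfl : t = 1 := by
    rcases t with _ | _ | t
    · omega
    · rfl
    · nlinarith
  have hdvd : n ∣ 4 := (Nat.dvd_add_right (dvd_mul_of_dvd_left (dvd_mul_left n 2) j)).mp
    (by rw [show 2 * n * j + 4 = n * m by omega]; exact dvd_mul_right n m)
  have hn4' : n ≤ 4 := Nat.le_of_dvd (by norm_num) hdvd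
  obtain ⟨w, rfl⟩ := hm
  interval_cases n
  · omega
  · exact absurd hn (by decide)
  · exact hn4 rfl

lemma natCast_mul_natCast_eq_neg_one (hpm : p = n * m + 1) : (n : ZMod p) * m = -1 := by
  have h : ((n * m + 1 : ℕ) : ZMod p) = 0 := hpm ▸ ZMod.natCast_self p
  push_cast at h
  linear_combination h

variable [Fact p.Prime]

lemma natCast_ne_zero_of_eq_mul_add_one (hpm : p = n * m + 1) : (n : ZMod p) ≠ 0 :=
  left_ne_zero_of_mul_eq_one (b := -(m : ZMod p))
    (by linear_combination -natCast_mul_natCast_eq_neg_one hpm)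

lemma ascPochhammer_eval_five_div_ne_zero (hpm : p = n * m + 1) (hn2 : 2 ≤ n) (hn : Even n)
    (hn4 : n ≠ 4) (hm : Odd m) (h2 : (2 : ZMod p) ≠ 0) :
    (ascPochhammer (ZMod p) m).eval (5 / (2 * (n : ZMod p))) ≠ 0 := by
  have hn0 := natCast_ne_zero_of_eq_mul_add_one hpm
  rw [Ne, ascPochhammer_eval_eq_zero_iff]
  rintro ⟨j, hj, hjγ⟩
  apply not_dvd_five_add_two_mul_mul hpm hn2 hn hn4 hm hj
  rw [← ZMod.natCast_eq_zero_iff]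
  field_simp at hjγ
  push_cast
  linear_combination hjγ

end Arithmetic

open Padic

lemma hasResidue_summand {p n m : ℕ} [Fact p.Prime] (hpm : p = n * m + 1)
    (h2 : (2 : ZMod p) ≠ 0)
    {x y : ℚ_[p]} (hx : HasResidue x 0) (hy : HasResidue y 0) {k : ℕ} (hk : k ≤ m)
    (hγ : (ascPochhammer (ZMod p) m).eval (5 / (2 * (n : ZMod p))) ≠ 0) :
    HasResidue
      (rf (1 / (n : ℚ_[p])) k *
        rf ((2 * (n : ℚ_[p]) - 3) / (2 * (n : ℚ_[p]))) k *
        rf ((1 - x) / (n : ℚ_[p])) k *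
        rf ((1 - y) / (n : ℚ_[p])) k *
        rf ((1 - (p : ℚ_[p])) / (n : ℚ_[p])) k /
      (rf (5 / (2 * (n : ℚ_[p]))) k *
        rf (1 + x / (n : ℚ_[p])) k *
        rf (1 + y / (n : ℚ_[p])) k *
        rf (1 + (p : ℚ_[p]) / (n : ℚ_[p])) k * (k.factorial : ℚ_[p])))
      ((m.choose k : ZMod p) ^ 4 *
        ((ascPochhammer (ZMod p) k).eval ((2 * (n : ZMod p) - 3) / (2 * n)) /
          (ascPochhammer (ZMod p) k).eval (5 / (2 * (n : ZMod p))))) := by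
  have hn := natCast_ne_zero_of_eq_mul_add_one hpm
  have h2n : (2 * n : ZMod p) ≠ 0 := mul_ne_zero h2 hn
  have hinv : 1 / (n : ZMod p) = -m := by
    rw [div_eq_iff hn]
    linear_combination natCast_mul_natCast_eq_neg_one hpm
  have hfact : (k.factorial : ZMod p) ≠ 0 := by
    rw [Ne, ZMod.natCast_eq_zero_iff, Nat.Prime.dvd_factorial Fact.out]
    have : 0 < n := Nat.pos_of_ne_zero (by rintro rfl; simp at hn)
    nlinarith
  have hγk := ascPochhammer_eval_ne_zero_of_le hk hγ
  have hp : HasResidue (p : ℚ_[p]) 0 := by simpa using HasResidue.natCast (p := p) p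
  have hshift : ∀ z : ℚ_[p], HasResidue z 0 →
      HasResidue ((1 - z) / (n : ℚ_[p])) (-(m : ZMod p)) ∧ HasResidue (1 + z / (n : ℚ_[p])) 1 :=
    fun z hz => ⟨by simpa [hinv] using (HasResidue.one.sub hz).div (.natCast n) hn,
      by simpa using HasResidue.one.add (hz.div (.natCast n) hn)⟩
  have hα : HasResidue (1 / (n : ℚ_[p])) (-(m : ZMod p)) :=
    hinv ▸ HasResidue.one.div (.natCast n) hn
  have hβ := (((HasResidue.ofNat 2).mul (.natCast n)).sub (.ofNat 3)).div
    ((HasResidue.ofNat 2).mul (.natCast n)) h2n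
  have hγ' := (HasResidue.ofNat 5).div ((HasResidue.ofNat 2).mul (.natCast n)) h2n
  have hnum := (((((hα.rf k).mul (hβ.rf k)).mul ((hshift x hx).1.rf k)).mul
    ((hshift y hy).1.rf k)).mul ((hshift _ hp).1.rf k))
  have hden := ((((hγ'.rf k).mul ((hshift x hx).2.rf k)).mul ((hshift y hy).2.rf k)).mul
    ((hshift _ hp).2.rf k)).mul (.natCast k.factorial)
  convert hnum.div hden (by simp [ascPochhammer_eval_one, hγk, hfact]) using 1
  rw [ascPochhammer_eval_one, ascPochhammer_eval_neg_natCast]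
  field_simp
  rw [← pow_mul, (show Even (k * 4) from ⟨2 * k, by ring⟩).neg_one_pow, mul_one]

theorem stmt8_general (n p : ℕ) [Fact p.Prime] (hn2 : 2 ≤ n) (hneven : Even n) (hn4 : n ≠ 4)
    (hpn : p % n = 1) (hpn2 : ¬ p % (2 * n) = 1) :
    ∀ x y : ℚ_[p], (∃ s : ℤ_[p], x = (p : ℚ_[p]) * s) →
      (∃ s : ℤ_[p], y = (p : ℚ_[p]) * s) →
      ∃ c : ℤ_[p],
        (∑ k ∈ Finset.range ((p - 1) / n + 1),
          rf (1 / (n : ℚ_[p])) k *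
            rf ((2 * (n : ℚ_[p]) - 3) / (2 * (n : ℚ_[p]))) k *
            rf ((1 - x) / (n : ℚ_[p])) k *
            rf ((1 - y) / (n : ℚ_[p])) k *
            rf ((1 - (p : ℚ_[p])) / (n : ℚ_[p])) k /
          (rf (5 / (2 * (n : ℚ_[p]))) k *
            rf (1 + x / (n : ℚ_[p])) k *
            rf (1 + y / (n : ℚ_[p])) k *
            rf (1 + (p : ℚ_[p]) / (n : ℚ_[p])) k * (k.factorial : ℚ_[p])))
        = (p : ℚ_[p]) * (c : ℚ_[p]) := by
  rintro x y ⟨s, rfl⟩ ⟨t, rfl⟩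
  obtain ⟨m, hpm⟩ : ∃ m, p = n * m + 1 := ⟨p / n, by have := Nat.div_add_mod p n; omega⟩
  have hmn : (p - 1) / n = m := by
    rw [hpm, Nat.add_sub_cancel, Nat.mul_div_cancel_left m (by omega)]
  have hm : Odd m := odd_of_eq_mul_add_one hpm (by omega) hpn2
  have h2 : (2 : ZMod p) ≠ 0 := by
    have hp2 : ¬ p ∣ 2 := fun h => by nlinarith [Nat.le_of_dvd two_pos h, hm.pos]
    exact_mod_cast (ZMod.natCast_eq_zero_iff 2 p).not.mpr hp2
  have hγ := ascPochhammer_eval_five_div_ne_zero hpm hn2 hneven hn4 hm h2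
  have hβγ : (2 * (n : ZMod p) - 3) / (2 * n) + 5 / (2 * n) + m = 1 := by
    have hn := natCast_ne_zero_of_eq_mul_add_one hpm
    field_simp
    linear_combination 2 * natCast_mul_natCast_eq_neg_one hpm
  rw [hmn]
  apply HasResidue.exists_eq_p_mul
  have hsum := HasResidue.sum fun k hk => hasResidue_summand hpm h2 (.p_mul s) (.p_mul t)
    (Nat.lt_succ_iff.mp (Finset.mem_range.mp hk)) hγ
  rwa [sum_choose_pow_mul_ascPochhammer_div_eq_zero hm hβγ hγ] at hsum

/-- Let `n` be even with `n ≥ 2`, `n ≠ 4`, and `p ≥ 7` prime with `p ≡ 1 (mod n)`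
but `p ≢ 1 (mod 2n)`. Then for all `x, y ∈ pℤ_p`,
`∑_{k=0}^{(p-1)/n} (1/n)_k ((2n-3)/(2n))_k ((1-x)/n)_k ((1-y)/n)_k ((1-p)/n)_k /
  ((5/(2n))_k (1+x/n)_k (1+y/n)_k (1+p/n)_k k!) ∈ pℤ_p`. -/
theorem stmt8 (n p : ℕ) [Fact p.Prime] (hn2 : 2 ≤ n) (hneven : Even n) (hn4 : n ≠ 4)
    (hp : 7 ≤ p) (hpn : p % n = 1) (hpn2 : ¬ p % (2 * n) = 1) :
    ∀ x y : ℚ_[p], (∃ s : ℤ_[p], x = (p : ℚ_[p]) * s) →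
      (∃ s : ℤ_[p], y = (p : ℚ_[p]) * s) →
      ∃ c : ℤ_[p],
        (∑ k ∈ Finset.range ((p - 1) / n + 1),
          rf (1 / (n : ℚ_[p])) k *
            rf ((2 * (n : ℚ_[p]) - 3) / (2 * (n : ℚ_[p]))) k *
            rf ((1 - x) / (n : ℚ_[p])) k *
            rf ((1 - y) / (n : ℚ_[p])) k *
            rf ((1 - (p : ℚ_[p])) / (n : ℚ_[p])) k /
          (rf (5 / (2 * (n : ℚ_[p]))) k *
            rf (1 + x / (n : ℚ_[p])) k *
            rf (1 + y / (n : ℚ_[p])) k *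
            rf (1 + (p : ℚ_[p]) / (n : ℚ_[p])) k * (k.factorial : ℚ_[p])))
        = (p : ℚ_[p]) * (c : ℚ_[p]) :=
  stmt8_general n p hn2 hneven hn4 hpn hpn2
end

section
/- Let n ≥ 2 be an integer and p ≥ 5 a prime with p ≡ 1 (mod n). Then ∑_{k=0}^{(p-1)/n} (2nk+1) · (1/n)_k^4 / (k!)^4 ≡ 0 (mod p) in ℤ_p. -/
section Aux

variable {p : ℕ} [Fact p.Prime]

lemma rf_zero (a : ℚ_[p]) : rf a 0 = 1 := by simp [rf]

lemma rf_succ (a : ℚ_[p]) (k : ℕ) : rf a (k + 1) = rf a k * (a + k) :=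
  Finset.prod_range_succ _ _

lemma norm_natCast_le_one (k : ℕ) : ‖(k : ℚ_[p])‖ ≤ 1 := by
  have := Padic.norm_int_le_one (p := p) (k : ℤ)
  simpa using this

lemma norm_rf_le (a : ℚ_[p]) (ha : ‖a‖ ≤ 1) (k : ℕ) : ‖rf a k‖ ≤ 1 := by
  induction k with
  | zero => simp [rf_zero]
  | succ k ih =>
    rw [rf_succ, norm_mul]
    have h1 : ‖a + (k : ℚ_[p])‖ ≤ 1 :=
      (Padic.nonarchimedean _ _).trans (max_le ha (norm_natCast_le_one k))
    calc ‖rf a k‖ * ‖a + (k : ℚ_[p])‖ ≤ 1 * 1 :=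
          mul_le_mul ih h1 (norm_nonneg _) zero_le_one
      _ = 1 := by ring

lemma norm_rf_sub_rf_le (x y : ℚ_[p]) (hx : ‖x‖ ≤ 1) (hy : ‖y‖ ≤ 1)
    (hxy : ‖x - y‖ ≤ (p : ℝ)⁻¹) (k : ℕ) : ‖rf x k - rf y k‖ ≤ (p : ℝ)⁻¹ := by
  have hp0 : (0 : ℝ) ≤ (p : ℝ)⁻¹ := by positivity
  induction k with
  | zero => simp only [rf_zero, sub_self, norm_zero]; exact hp0
  | succ k ih =>
    have hxk : ‖x + (k : ℚ_[p])‖ ≤ 1 :=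
      (Padic.nonarchimedean _ _).trans (max_le hx (norm_natCast_le_one k))
    have hdec : rf x (k + 1) - rf y (k + 1)
        = (rf x k - rf y k) * (x + k) + rf y k * (x - y) := by
      rw [rf_succ, rf_succ]; ring
    rw [hdec]
    refine (Padic.nonarchimedean _ _).trans (max_le ?_ ?_)
    · rw [norm_mul]
      calc ‖rf x k - rf y k‖ * ‖x + (k : ℚ_[p])‖ ≤ (p : ℝ)⁻¹ * 1 :=
            mul_le_mul ih hxk (norm_nonneg _) hp0
        _ = (p : ℝ)⁻¹ := by ring
    · rw [norm_mul]
      calc ‖rf y k‖ * ‖x - y‖ ≤ 1 * (p : ℝ)⁻¹ :=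
            mul_le_mul (norm_rf_le y hy k) hxy (norm_nonneg _) zero_le_one
        _ = (p : ℝ)⁻¹ := by ring

lemma norm_pow4_sub_pow4_le {a b : ℚ_[p]} (ha : ‖a‖ ≤ 1) (hb : ‖b‖ ≤ 1)
    (h : ‖a - b‖ ≤ (p : ℝ)⁻¹) : ‖a ^ 4 - b ^ 4‖ ≤ (p : ℝ)⁻¹ := by
  have hp0 : (0 : ℝ) ≤ (p : ℝ)⁻¹ := by positivity
  have h4 : a ^ 4 - b ^ 4 = (a - b) * (a ^ 3 + a ^ 2 * b + a * b ^ 2 + b ^ 3) := by ring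
  have h1 : ‖a ^ 3 + a ^ 2 * b + a * b ^ 2 + b ^ 3‖ ≤ 1 := by
    have t1 : ‖a ^ 3‖ ≤ 1 := by rw [norm_pow]; exact pow_le_one₀ (norm_nonneg _) ha
    have t2 : ‖a ^ 2 * b‖ ≤ 1 := by
      rw [norm_mul, norm_pow]
      exact mul_le_one₀ (pow_le_one₀ (norm_nonneg _) ha) (by positivity) hb
    have t3 : ‖a * b ^ 2‖ ≤ 1 := by
      rw [norm_mul, norm_pow]
      exact mul_le_one₀ ha (by positivity) (pow_le_one₀ (norm_nonneg _) hb)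
    have t4 : ‖b ^ 3‖ ≤ 1 := by rw [norm_pow]; exact pow_le_one₀ (norm_nonneg _) hb
    refine (Padic.nonarchimedean _ _).trans (max_le ((Padic.nonarchimedean _ _).trans
      (max_le ((Padic.nonarchimedean _ _).trans (max_le t1 t2)) t3)) t4)
  rw [h4, norm_mul]
  calc ‖a - b‖ * ‖a ^ 3 + a ^ 2 * b + a * b ^ 2 + b ^ 3‖ ≤ (p : ℝ)⁻¹ * 1 :=
        mul_le_mul h h1 (norm_nonneg _) hp0
    _ = (p : ℝ)⁻¹ := by ring

lemma rf_neg_nat (m k : ℕ) (hk : k ≤ m) :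
    rf (-(m : ℚ_[p])) k = (-1) ^ k * (m.descFactorial k : ℚ_[p]) := by
  induction k with
  | zero => simp [rf_zero]
  | succ k ih =>
    have hk' : k ≤ m := Nat.le_of_succ_le hk
    rw [rf_succ, ih hk', Nat.descFactorial_succ]
    have hsub : ((m - k : ℕ) : ℚ_[p]) = (m : ℚ_[p]) - k := by
      push_cast [Nat.cast_sub hk']; ring
    push_cast [hsub]
    ring

/-- The key integer symmetry identity. -/
lemma sum_reflect_zero (m : ℕ) :
    ∑ k ∈ Finset.range (m + 1), (2 * (k : ℤ) - m) * (m.choose k : ℤ) ^ 4 = 0 := by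
  set f : ℕ → ℤ := fun k => (2 * (k : ℤ) - m) * (m.choose k : ℤ) ^ 4 with hf
  have hrefl := Finset.sum_range_reflect f (m + 1)
  have hneg : ∀ j ∈ Finset.range (m + 1), f (m + 1 - 1 - j) = -f j := by
    intro j hj
    have hj' : j ≤ m := Nat.lt_succ_iff.mp (Finset.mem_range.mp hj)
    have h1 : m + 1 - 1 - j = m - j := by omega
    have h2 : ((m - j : ℕ) : ℤ) = (m : ℤ) - j := by
      push_cast [Nat.cast_sub hj']; ring
    have h3 : m.choose (m - j) = m.choose j := Nat.choose_symm hj'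
    rw [h1, hf]
    simp only [h2, h3]
    ring
  rw [Finset.sum_congr rfl hneg, Finset.sum_neg_distrib] at hrefl
  linarith

end Aux

/-- Let `n ≥ 2` and `p ≥ 5` be a prime with `p ≡ 1 (mod n)`. Then
`∑_{k=0}^{(p-1)/n} (2nk+1) (1/n)_k⁴ / (k!)⁴ ≡ 0 (mod p)` in `ℤ_p`,
i.e. the sum lies in `pℤ_p`. -/
theorem stmt11 (n p : ℕ) [Fact p.Prime] (hn : 2 ≤ n) (hp : 5 ≤ p) (hpn : p % n = 1) :
    ∃ c : ℤ_[p],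
      (∑ k ∈ Finset.range ((p - 1) / n + 1),
        (2 * (n : ℚ_[p]) * (k : ℚ_[p]) + 1) *
          rf (1 / (n : ℚ_[p])) k ^ 4 / (k.factorial : ℚ_[p]) ^ 4)
      = (p : ℚ_[p]) * (c : ℚ_[p]) := by
  have hpprime : p.Prime := Fact.out
  have hn0 : 0 < n := by omega
  -- basic arithmetic
  have hnp : n < p := by
    rcases lt_trichotomy n p with h | h | h
    · exact h
    · exfalso; rw [h, Nat.mod_self] at hpn; omega
    · exfalso; rw [Nat.mod_eq_of_lt h] at hpn; omega
  set m : ℕ := p / n with hm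
  have hnm : n * m + 1 = p := by
    have h := Nat.div_add_mod p n
    rw [hpn] at h
    rw [hm]
    exact h
  have hmrange : (p - 1) / n = m := by
    have h1 : p - 1 = n * m := by omega
    rw [h1, Nat.mul_div_cancel_left _ hn0]
  have hmlt : m < p := by
    have : m ≤ n * m := Nat.le_mul_of_pos_left _ hn0
    omega
  -- norms of basics
  have hpdn : ¬ (p : ℤ) ∣ (n : ℤ) := by
    rw [Int.natCast_dvd_natCast]
    intro h
    have := Nat.le_of_dvd hn0 h
    omega
  have hnnorm : ‖(n : ℚ_[p])‖ = 1 := by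
    have hle : ‖((n : ℤ) : ℚ_[p])‖ ≤ 1 := Padic.norm_int_le_one _
    have hlt : ¬ ‖((n : ℤ) : ℚ_[p])‖ < 1 := by
      rw [Padic.norm_intCast_lt_one_iff]; exact hpdn
    push_cast at hle hlt
    linarith
  have hnne : (n : ℚ_[p]) ≠ 0 := by
    intro h; rw [h] at hnnorm; simp at hnnorm
  set x : ℚ_[p] := 1 / (n : ℚ_[p]) with hxdef
  set y : ℚ_[p] := -(m : ℚ_[p]) with hydef
  have hx : ‖x‖ ≤ 1 := by
    rw [hxdef, norm_div, hnnorm]; simp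
  have hy : ‖y‖ ≤ 1 := by
    rw [hydef, norm_neg]; exact norm_natCast_le_one m
  have hpne : (p : ℚ_[p]) ≠ 0 := by
    exact_mod_cast Nat.cast_ne_zero.mpr hpprime.ne_zero
  have hxy : ‖x - y‖ ≤ (p : ℝ)⁻¹ := by
    have hval : x - y = (p : ℚ_[p]) / (n : ℚ_[p]) := by
      rw [hxdef, hydef]
      field_simp
      have : ((n : ℚ_[p]) * m + 1) = (p : ℚ_[p]) := by
        exact_mod_cast congrArg (Nat.cast : ℕ → ℚ_[p]) hnm
      linear_combination this
    rw [hval, norm_div, hnnorm, Padic.norm_p]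
    simp
  -- norm of factorials
  have hfact : ∀ k, k ≤ m → ‖(k.factorial : ℚ_[p])‖ = 1 := by
    intro k hk
    have hnd : ¬ (p : ℤ) ∣ (k.factorial : ℤ) := by
      rw [Int.natCast_dvd_natCast, hpprime.dvd_factorial]
      omega
    have hle : ‖((k.factorial : ℤ) : ℚ_[p])‖ ≤ 1 := Padic.norm_int_le_one _
    have hlt : ¬ ‖((k.factorial : ℤ) : ℚ_[p])‖ < 1 := by
      rw [Padic.norm_intCast_lt_one_iff]; exact hnd
    push_cast at hle hlt
    linarith
  -- each term is close to the binomial term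
  have hterm : ∀ k ∈ Finset.range (m + 1),
      ‖(2 * (n : ℚ_[p]) * (k : ℚ_[p]) + 1) * rf x k ^ 4 / (k.factorial : ℚ_[p]) ^ 4
        - (2 * (n : ℚ_[p]) * (k : ℚ_[p]) + 1) * ((m.choose k : ℚ_[p])) ^ 4‖ ≤ (p : ℝ)⁻¹ := by
    intro k hk
    have hk' : k ≤ m := Nat.lt_succ_iff.mp (Finset.mem_range.mp hk)
    have hkf : ‖(k.factorial : ℚ_[p])‖ = 1 := hfact k hk'
    have hkfne : (k.factorial : ℚ_[p]) ≠ 0 := by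
      intro h; rw [h] at hkf; simp at hkf
    -- rf y k ^ 4 = (k! * choose)^4
    have hrfy : rf y k ^ 4 = ((k.factorial : ℚ_[p]) * (m.choose k : ℚ_[p])) ^ 4 := by
      have h1 : ((-1 : ℚ_[p]) ^ k) ^ 4 = 1 := by
        rw [← pow_mul, mul_comm, pow_mul]
        norm_num
      rw [hydef, rf_neg_nat m k hk', Nat.descFactorial_eq_factorial_mul_choose, mul_pow, h1,
        one_mul]
      push_cast
      ring
    have hpow : ‖rf x k ^ 4 - rf y k ^ 4‖ ≤ (p : ℝ)⁻¹ :=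
      norm_pow4_sub_pow4_le (norm_rf_le x hx k) (norm_rf_le y hy k)
        (norm_rf_sub_rf_le x y hx hy hxy k)
    have hrw : (2 * (n : ℚ_[p]) * (k : ℚ_[p]) + 1) * rf x k ^ 4 / (k.factorial : ℚ_[p]) ^ 4
        - (2 * (n : ℚ_[p]) * (k : ℚ_[p]) + 1) * ((m.choose k : ℚ_[p])) ^ 4
        = (2 * (n : ℚ_[p]) * (k : ℚ_[p]) + 1)
          * ((rf x k ^ 4 - rf y k ^ 4) / (k.factorial : ℚ_[p]) ^ 4) := by
      rw [hrfy]
      field_simp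
    rw [hrw, norm_mul, norm_div, norm_pow, hkf]
    have hc : ‖(2 * (n : ℚ_[p]) * (k : ℚ_[p]) + 1)‖ ≤ 1 := by
      have : (2 * (n : ℚ_[p]) * (k : ℚ_[p]) + 1) = ((2 * n * k + 1 : ℕ) : ℚ_[p]) := by
        push_cast; ring
      rw [this]
      exact norm_natCast_le_one _
    have hp0 : (0 : ℝ) ≤ (p : ℝ)⁻¹ := by positivity
    calc ‖(2 * (n : ℚ_[p]) * (k : ℚ_[p]) + 1)‖ * (‖rf x k ^ 4 - rf y k ^ 4‖ / 1 ^ 4)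
        ≤ 1 * ((p : ℝ)⁻¹ / 1 ^ 4) := by
          apply mul_le_mul hc _ _ zero_le_one
          · simpa using hpow
          · positivity
      _ = (p : ℝ)⁻¹ := by norm_num
  -- the integer identity
  set A : ℕ := ∑ k ∈ Finset.range (m + 1), (2 * n * k + 1) * (m.choose k) ^ 4 with hA
  set B : ℕ := ∑ k ∈ Finset.range (m + 1), (m.choose k) ^ 4 with hB
  have hAB : (A : ℤ) = (p : ℤ) * (B : ℤ) := by
    have hz := sum_reflect_zero m
    have hsplit : ∀ k ∈ Finset.range (m + 1),
        ((2 * n * k + 1 : ℕ) : ℤ) * ((m.choose k : ℤ)) ^ 4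
        = (n : ℤ) * ((2 * (k : ℤ) - m) * (m.choose k : ℤ) ^ 4)
          + ((n : ℤ) * m + 1) * ((m.choose k : ℤ) ^ 4) := by
      intro k _
      push_cast
      ring
    have : (A : ℤ) = (n : ℤ) * (∑ k ∈ Finset.range (m + 1),
        (2 * (k : ℤ) - m) * (m.choose k : ℤ) ^ 4) + ((n : ℤ) * m + 1) * (B : ℤ) := by
      rw [hA, hB]
      push_cast
      rw [Finset.mul_sum, Finset.mul_sum, ← Finset.sum_add_distrib]
      refine Finset.sum_congr rfl ?_
      intro k _
      ring
    rw [this, hz]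
    have hcast : ((n : ℤ) * m + 1) = (p : ℤ) := by exact_mod_cast hnm
    rw [hcast]
    ring
  have hABn : A = p * B := by exact_mod_cast hAB
  -- put it together: the sum S
  set S : ℚ_[p] := ∑ k ∈ Finset.range ((p - 1) / n + 1),
      (2 * (n : ℚ_[p]) * (k : ℚ_[p]) + 1) *
        rf (1 / (n : ℚ_[p])) k ^ 4 / (k.factorial : ℚ_[p]) ^ 4 with hS
  have hScast : (A : ℚ_[p]) = ∑ k ∈ Finset.range (m + 1),
      (2 * (n : ℚ_[p]) * (k : ℚ_[p]) + 1) * ((m.choose k : ℚ_[p])) ^ 4 := by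
    rw [hA]
    push_cast
    ring
  have hSdiff : ‖S - (A : ℚ_[p])‖ ≤ (p : ℝ)⁻¹ := by
    rw [hS, hmrange, hScast, ← Finset.sum_sub_distrib]
    refine IsUltrametricDist.norm_sum_le_of_forall_le_of_nonneg (by positivity) ?_
    intro k hk
    exact hterm k hk
  have hAnorm : ‖(A : ℚ_[p])‖ ≤ (p : ℝ)⁻¹ := by
    have : (A : ℚ_[p]) = (p : ℚ_[p]) * (B : ℚ_[p]) := by exact_mod_cast hAB
    rw [this, norm_mul, Padic.norm_p]
    calc (p : ℝ)⁻¹ * ‖(B : ℚ_[p])‖ ≤ (p : ℝ)⁻¹ * 1 := by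
          apply mul_le_mul_of_nonneg_left (norm_natCast_le_one B) (by positivity)
      _ = (p : ℝ)⁻¹ := by ring
  have hSnorm : ‖S‖ ≤ (p : ℝ)⁻¹ := by
    have : S = (S - (A : ℚ_[p])) + (A : ℚ_[p]) := by ring
    rw [this]
    exact (Padic.nonarchimedean _ _).trans (max_le hSdiff hAnorm)
  -- construct c
  have hcle : ‖S * (p : ℚ_[p])⁻¹‖ ≤ 1 := by
    rw [norm_mul, norm_inv, Padic.norm_p, inv_inv]
    have hppos : (0 : ℝ) < (p : ℝ) := by
      exact_mod_cast hpprime.pos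
    calc ‖S‖ * (p : ℝ) ≤ (p : ℝ)⁻¹ * (p : ℝ) :=
          mul_le_mul_of_nonneg_right hSnorm (le_of_lt hppos)
      _ = 1 := inv_mul_cancel₀ (ne_of_gt hppos)
  refine ⟨⟨S * (p : ℚ_[p])⁻¹, hcle⟩, ?_⟩
  show S = (p : ℚ_[p]) * (S * (p : ℚ_[p])⁻¹)
  field_simp
end

section
/- Let n ≥ 2 be an integer and p an odd prime with p ≡ 1 (mod n(n-1)). Then there exists C ∈ ℤ_p such that for every y ∈ ℤ_p: ∑_{k=0}^{(p-1)/(n-1)} [ ((1-p)/(n-1))_k · (1/n + (p/(n-1))(y + 1/n))_k · ( (1/n + p/(n(n-1)))_k )^{n-1} ] / [ (1/(n-1) + yp/(n-1))_k · ( (1/(n-1))_k )^{n-1} · k! ] ≡ ∑_{k=0}^{(p-1)/(n-1)} ( (1/n)_k )^n / ( ( (1/(n-1))_k )^{n-1} · k! ) + (1+y)·C·p (mod p^2) in ℤ_p. -/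
section Ring
variable {R : Type*} [CommRing R]

/-- rising factorial in a commutative ring -/
def rfR (a : R) (k : ℕ) : R := ∏ j ∈ Finset.range k, (a + (j : R))

lemma rfR_expand (a : R) (k : ℕ) :
    ∃ d : R, ∀ x : R, ∃ e : R,
      rfR (a + x) k = rfR a k + x * d + x ^ 2 * e := by
  induction k with
  | zero => exact ⟨0, fun x => ⟨0, by simp [rfR]⟩⟩
  | succ k ih =>
    obtain ⟨d, hd⟩ := ih
    refine ⟨d * (a + k) + rfR a k, fun x => ?_⟩
    obtain ⟨e, he⟩ := hd x
    refine ⟨e * (a + k) + d + x * e, ?_⟩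
    rw [rfR, rfR, Finset.prod_range_succ, Finset.prod_range_succ, ← rfR, ← rfR, he]
    ring

lemma pow_expand (P G u : R) (m : ℕ) :
    ∃ e : R, (G + P * u) ^ (m + 1)
      = G ^ (m + 1) + ((m + 1 : ℕ) : R) * G ^ m * (P * u) + P ^ 2 * e := by
  induction m with
  | zero => exact ⟨0, by push_cast; ring⟩
  | succ m ih =>
    obtain ⟨e, he⟩ := ih
    refine ⟨((m + 1 : ℕ) : R) * G ^ m * u ^ 2 + e * (G + P * u), ?_⟩
    rw [pow_succ, he]
    push_cast
    ring

lemma core (P ν α β Dα Dβ y G H F c' h1 h2 h3 h4 : R) (m : ℕ)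
    (hα : α * ν = 1)
    (e1 : ∃ E, h1 = H + P * (-β * Dβ + P * E))
    (e2 : ∃ E, h2 = H + P * (β * y * Dβ + P * E))
    (e3 : ∃ E, h3 = G + P * (β * (y + α) * Dα + P * E))
    (e4 : ∃ E, h4 = G ^ (m + 1) + P * ((ν - 1) * G ^ m * (β * α * Dα) + P * E))
    (hc : c' = β * (Dα * H * G ^ (m + 1) - Dβ * G ^ (m + 2))) :
    ∃ W : R,
      h1 * h3 * h4 * (H ^ (m + 2) * F)
        - G ^ (m + 2) * H * (h2 * H ^ (m + 1) * F)
        - (1 + y) * P * c' * (h2 * H ^ (m + 1) * F)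
      = P ^ 2 * W := by
  obtain ⟨E1, rfl⟩ := e1
  obtain ⟨E2, rfl⟩ := e2
  obtain ⟨E3, rfl⟩ := e3
  obtain ⟨E4, rfl⟩ := e4
  subst hc
  refine ⟨H ^ (m + 1) * F *
    (H * (E1 * G * G ^ (m + 1) + E3 * H * G ^ (m + 1) + E4 * H * G - G ^ (m + 2) * E2)
      + H * ((-β * Dβ + P * E1) * (β * (y + α) * Dα + P * E3) * G ^ (m + 1)
          + (-β * Dβ + P * E1) * G * ((ν - 1) * G ^ m * (β * α * Dα) + P * E4)
          + H * (β * (y + α) * Dα + P * E3) * ((ν - 1) * G ^ m * (β * α * Dα) + P * E4)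
          + P * ((-β * Dβ + P * E1) * (β * (y + α) * Dα + P * E3)
              * ((ν - 1) * G ^ m * (β * α * Dα) + P * E4)))
      - (1 + y) * (β * (Dα * H * G ^ (m + 1) - Dβ * G ^ (m + 2))) * (β * y * Dβ + P * E2)), ?_⟩
  linear_combination (P * H ^ (m + 2) * F * β * Dα * H * G ^ (m + 1)) * hα
end Ring

lemma glue {K : Type*} [Field K] (P h1 h2 h3 g0 G H F c' W yq : K) (m : ℕ)
    (hH : H ≠ 0) (hF : F ≠ 0) (hh2 : h2 ≠ 0)
    (key : h1 * h3 * g0 ^ (m + 1) * (H ^ (m + 2) * F)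
        - G ^ (m + 2) * H * (h2 * H ^ (m + 1) * F)
        - (1 + yq) * P * c' * (h2 * H ^ (m + 1) * F) = P ^ 2 * W) :
    h1 * h3 * g0 ^ (m + 1) / (h2 * H ^ (m + 1) * F) - G ^ (m + 2) / (H ^ (m + 1) * F)
      - (1 + yq) * (c' * (H ^ (m + 2) * F)⁻¹) * P
    = P ^ 2 * (W * (H ^ (m + 2) * F)⁻¹ * (h2 * H ^ (m + 1) * F)⁻¹) := by
  have hu : H ^ (m + 2) * F ≠ 0 := mul_ne_zero (pow_ne_zero _ hH) hF
  have hd : h2 * H ^ (m + 1) * F ≠ 0 := mul_ne_zero (mul_ne_zero hh2 (pow_ne_zero _ hH)) hF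
  have hw : H ^ (m + 1) * F ≠ 0 := mul_ne_zero (pow_ne_zero _ hH) hF
  have ha : (H ^ (m + 2) * F) * (H ^ (m + 2) * F)⁻¹ = 1 := mul_inv_cancel₀ hu
  have hb : (h2 * H ^ (m + 1) * F) * (h2 * H ^ (m + 1) * F)⁻¹ = 1 := mul_inv_cancel₀ hd
  have hc : (H ^ (m + 1) * F) * (H ^ (m + 1) * F)⁻¹ = 1 := mul_inv_cancel₀ hw
  linear_combination ((H ^ (m + 2) * F)⁻¹ * (h2 * H ^ (m + 1) * F)⁻¹) * key
    - (h1 * h3 * g0 ^ (m + 1) * (h2 * H ^ (m + 1) * F)⁻¹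
        - G ^ (m + 2) * (H ^ (m + 1) * F)⁻¹) * ha
    + ((1 + yq) * P * c' * (H ^ (m + 2) * F)⁻¹
        + G ^ (m + 2) * H * (H ^ (m + 2) * F)⁻¹) * hb
    - (G ^ (m + 2) * H * (H ^ (m + 2) * F)⁻¹) * hc

section Padic
variable {p : ℕ} [Fact p.Prime]

/-- truncation of a `p`-adic number to a `p`-adic integer (junk value `0` if not integral) -/
noncomputable def toZp (x : ℚ_[p]) : ℤ_[p] := if h : ‖x‖ ≤ 1 then ⟨x, h⟩ else 0

lemma toZp_coe {x : ℚ_[p]} (h : ‖x‖ ≤ 1) : ((toZp x : ℤ_[p]) : ℚ_[p]) = x := by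
  simp [toZp, h]

lemma qnorm_nat_eq_one {a : ℕ} (h : ¬ (p : ℤ) ∣ (a : ℤ)) : ‖(a : ℚ_[p])‖ = 1 := by
  have h1 : ‖((a : ℤ) : ℚ_[p])‖ ≤ 1 := Padic.norm_int_le_one _
  have h2 : ¬ ‖((a : ℤ) : ℚ_[p])‖ < 1 := by
    rw [Padic.norm_intCast_lt_one_iff]; exact h
  push_cast at h1 h2
  linarith [not_lt.mp h2]

lemma isUnit_natCastZ {a : ℕ} (h : ¬ p ∣ a) : IsUnit (a : ℤ_[p]) := by
  rw [PadicInt.isUnit_iff]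
  have : ((a : ℤ_[p]) : ℚ_[p]) = (a : ℚ_[p]) := by push_cast; rfl
  rw [← PadicInt.padic_norm_e_of_padicInt, this]
  exact qnorm_nat_eq_one (by exact_mod_cast h)

lemma isUnit_add_p (x t : ℤ_[p]) (hx : IsUnit x) : IsUnit (x + p * t) := by
  rw [PadicInt.isUnit_iff] at hx ⊢
  have h1 : ‖(p : ℤ_[p]) * t‖ < 1 := by
    calc ‖(p : ℤ_[p]) * t‖ ≤ ‖(p : ℤ_[p])‖ * ‖t‖ := norm_mul_le _ _
    _ ≤ ‖(p : ℤ_[p])‖ * 1 := by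
        have := PadicInt.norm_le_one t
        have h0 : (0:ℝ) ≤ ‖(p : ℤ_[p])‖ := norm_nonneg _
        nlinarith
    _ = ‖(p : ℤ_[p])‖ := mul_one _
    _ < 1 := by
        rw [PadicInt.norm_p]
        have hp2 : 2 ≤ p := (Fact.out : p.Prime).two_le
        rw [inv_lt_one_iff₀]
        right
        exact_mod_cast hp2
  rw [PadicInt.norm_add_eq_max_of_ne (by rw [hx]; exact (ne_of_lt h1).symm), hx]
  exact max_eq_left (le_of_lt h1)

lemma rfR_coe (a : ℤ_[p]) (k : ℕ) : ((rfR a k : ℤ_[p]) : ℚ_[p]) = rf (a : ℚ_[p]) k := by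
  induction k with
  | zero => simp [rfR, rf]
  | succ k ih =>
    rw [rfR, rf, Finset.prod_range_succ, Finset.prod_range_succ, ← rfR, ← rf,
      PadicInt.coe_mul, ih]
    push_cast
    ring

lemma unit_coe_norm {z : ℤ_[p]} (hz : IsUnit z) : ‖(z : ℚ_[p])‖ = 1 := by
  rw [PadicInt.padic_norm_e_of_padicInt]
  exact PadicInt.isUnit_iff.mp hz

lemma unit_coe_ne {z : ℤ_[p]} (hz : IsUnit z) : (z : ℚ_[p]) ≠ 0 := by
  intro h
  have := unit_coe_norm hz
  rw [h, norm_zero] at this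
  norm_num at this

end Padic

set_option maxHeartbeats 2000000 in
/-- Let `n ≥ 2` and let `p` be an odd prime with `p ≡ 1 (mod n(n-1))`. Then there
exists `C ∈ ℤ_p` such that for every `y ∈ ℤ_p`,
`∑_{k=0}^{(p-1)/(n-1)} ((1-p)/(n-1))_k (1/n + (p/(n-1))(y+1/n))_k
   ((1/n + p/(n(n-1)))_k)^{n-1} / ((1/(n-1) + yp/(n-1))_k ((1/(n-1))_k)^{n-1} k!)
≡ ∑_{k=0}^{(p-1)/(n-1)} ((1/n)_k)^n / (((1/(n-1))_k)^{n-1} k!) + (1+y)·C·p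
(mod p²)` in `ℤ_p`. -/
theorem stmt13 (n p : ℕ) [Fact p.Prime] (hn : 2 ≤ n) (hp : Odd p)
    (hpn : p % (n * (n - 1)) = 1) :
    ∃ C : ℤ_[p], ∀ y : ℤ_[p],
      ∃ z : ℤ_[p],
        (∑ k ∈ Finset.range ((p - 1) / (n - 1) + 1),
          rf ((1 - (p : ℚ_[p])) / ((n : ℚ_[p]) - 1)) k *
            rf (1 / (n : ℚ_[p]) +
              ((p : ℚ_[p]) / ((n : ℚ_[p]) - 1)) * ((y : ℚ_[p]) + 1 / (n : ℚ_[p]))) k *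
            rf (1 / (n : ℚ_[p]) + (p : ℚ_[p]) / ((n : ℚ_[p]) * ((n : ℚ_[p]) - 1))) k
              ^ (n - 1) /
          (rf (1 / ((n : ℚ_[p]) - 1) +
              (y : ℚ_[p]) * (p : ℚ_[p]) / ((n : ℚ_[p]) - 1)) k *
            rf (1 / ((n : ℚ_[p]) - 1)) k ^ (n - 1) * (k.factorial : ℚ_[p])))
        - ((∑ k ∈ Finset.range ((p - 1) / (n - 1) + 1),
            rf (1 / (n : ℚ_[p])) k ^ n /
              (rf (1 / ((n : ℚ_[p]) - 1)) k ^ (n - 1) * (k.factorial : ℚ_[p])))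
            + (1 + (y : ℚ_[p])) * (C : ℚ_[p]) * (p : ℚ_[p]))
        = (p : ℚ_[p]) ^ 2 * (z : ℚ_[p]) := by
  obtain ⟨m, rfl⟩ : ∃ m, n = m + 2 := ⟨n - 2, by omega⟩
  clear hn
  simp only [show m + 2 - 1 = m + 1 from rfl] at hpn ⊢
  set M := (p - 1) / (m + 1) with hMdef
  have pp : p.Prime := Fact.out
  have hp2 : 2 ≤ p := pp.two_le
  have hq : (m + 2) * (m + 1) ∣ p - 1 := by
    refine ⟨p / ((m + 2) * (m + 1)), ?_⟩
    have h := Nat.div_add_mod p ((m + 2) * (m + 1))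
    rw [hpn] at h
    omega
  have hM1 : (m + 1) * M = p - 1 := by
    rw [hMdef]
    exact Nat.mul_div_cancel' (dvd_trans (dvd_mul_left _ _) hq)
  have hpd : ¬ p ∣ (m + 2) * (m + 1) := by
    intro h
    have h2 : p ∣ p - 1 := h.trans hq
    have := Nat.le_of_dvd (by omega) h2
    omega
  have hpm2 : ¬ p ∣ (m + 2) := fun h => hpd (h.mul_right _)
  have hpm1 : ¬ p ∣ (m + 1) := fun h => hpd (h.mul_left _)
  have hMlt : M < p := by
    have : M ≤ (m + 1) * M := Nat.le_mul_of_pos_left M (by omega)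
    omega
  have hfacnd : ∀ j, j < M → ¬ p ∣ (1 + (m + 1) * j) := by
    intro j hj hdvd
    have h1 : (m + 1) * (j + 1) ≤ (m + 1) * M := Nat.mul_le_mul_left _ (by omega)
    have h2 := Nat.le_of_dvd (by omega) hdvd
    have h3 : (m + 1) * (j + 1) = (m + 1) * j + (m + 1) := by ring
    omega
  have hn2 : ‖((m + 2 : ℕ) : ℚ_[p])‖ = 1 := qnorm_nat_eq_one (by exact_mod_cast hpm2)
  have hn1 : ‖((m + 1 : ℕ) : ℚ_[p])‖ = 1 := qnorm_nat_eq_one (by exact_mod_cast hpm1)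
  have hn2q : ((m + 2 : ℕ) : ℚ_[p]) ≠ 0 := by
    intro h; rw [h, norm_zero] at hn2; norm_num at hn2
  have hn1q : ((m + 1 : ℕ) : ℚ_[p]) ≠ 0 := by
    intro h; rw [h, norm_zero] at hn1; norm_num at hn1
  obtain ⟨α, hαq, hα⟩ : ∃ a : ℤ_[p], ((a : ℚ_[p]) = (((m + 2 : ℕ) : ℚ_[p]))⁻¹)
      ∧ a * ((m + 2 : ℕ) : ℤ_[p]) = 1 := by
    refine ⟨⟨(((m + 2 : ℕ) : ℚ_[p]))⁻¹, by rw [norm_inv, hn2]; norm_num⟩, rfl, ?_⟩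
    apply PadicInt.ext
    push_cast
    exact inv_mul_cancel₀ (by push_cast at hn2q ⊢; exact hn2q)
  obtain ⟨β, hβq, hβ⟩ : ∃ b : ℤ_[p], ((b : ℚ_[p]) = (((m + 1 : ℕ) : ℚ_[p]))⁻¹)
      ∧ b * ((m + 1 : ℕ) : ℤ_[p]) = 1 := by
    refine ⟨⟨(((m + 1 : ℕ) : ℚ_[p]))⁻¹, by rw [norm_inv, hn1]; norm_num⟩, rfl, ?_⟩
    apply PadicInt.ext
    push_cast
    exact inv_mul_cancel₀ (by push_cast at hn1q ⊢; exact hn1q)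
  have hν1 : ((m + 1 : ℕ) : ℤ_[p]) = ((m + 2 : ℕ) : ℤ_[p]) - 1 := by push_cast; ring
  have hβu : IsUnit β := IsUnit.of_mul_eq_one _ hβ
  have hfac : ∀ j, j < M → IsUnit (β + (j : ℤ_[p])) := by
    intro j hj
    have h1 : β + (j : ℤ_[p]) = β * ((1 + (m + 1) * j : ℕ) : ℤ_[p]) := by
      have hβ' := hβ
      push_cast at hβ' ⊢
      linear_combination (-(j : ℤ_[p])) * hβ'
    rw [h1]
    exact hβu.mul (isUnit_natCastZ (hfacnd j hj))
  have hHu : ∀ k, k ≤ M → IsUnit (rfR β k) := by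
    intro k hk
    refine Finset.prod_induction _ IsUnit (fun a b ha hb => ha.mul hb) isUnit_one ?_
    intro j hj
    exact hfac j (lt_of_lt_of_le (Finset.mem_range.mp hj) hk)
  have hFu : ∀ k, k ≤ M → IsUnit ((k.factorial : ℤ_[p])) := by
    intro k hk
    refine isUnit_natCastZ ?_
    intro hdvd
    have := (Nat.Prime.dvd_factorial pp).mp hdvd
    omega
  have hh2u : ∀ (y : ℤ_[p]) k, k ≤ M → IsUnit (rfR (β + ↑p * (β * y)) k) := by
    intro y k hk
    refine Finset.prod_induction _ IsUnit (fun a b ha hb => ha.mul hb) isUnit_one ?_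
    intro j hj
    have h1 : β + ↑p * (β * y) + (j : ℤ_[p]) = (β + (j : ℤ_[p])) + ↑p * (β * y) := by ring
    rw [h1]
    exact isUnit_add_p _ _ (hfac j (lt_of_lt_of_le (Finset.mem_range.mp hj) hk))
  choose Dβ hDβ using fun k : ℕ => rfR_expand β k
  choose Eβ hEβ using hDβ
  choose Dα hDα using fun k : ℕ => rfR_expand α k
  choose Eα hEα using hDα
  have hcore : ∀ (y : ℤ_[p]) (k : ℕ), ∃ W : ℤ_[p],
      rfR (β + ↑p * (-β)) k * rfR (α + ↑p * (β * (y + α))) k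
          * (rfR (α + ↑p * (β * α)) k) ^ (m + 1)
          * ((rfR β k) ^ (m + 2) * (k.factorial : ℤ_[p]))
        - (rfR α k) ^ (m + 2) * rfR β k
          * (rfR (β + ↑p * (β * y)) k * (rfR β k) ^ (m + 1) * (k.factorial : ℤ_[p]))
        - (1 + y) * ↑p * (β * (Dα k * rfR β k * (rfR α k) ^ (m + 1)
              - Dβ k * (rfR α k) ^ (m + 2)))
          * (rfR (β + ↑p * (β * y)) k * (rfR β k) ^ (m + 1) * (k.factorial : ℤ_[p]))
      = (↑p : ℤ_[p]) ^ 2 * W := by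
    intro y k
    refine core (↑p) ((m + 2 : ℕ) : ℤ_[p]) α β (Dα k) (Dβ k) y (rfR α k) (rfR β k)
      _ _ _ _ _ _ m hα ?_ ?_ ?_ ?_ rfl
    · exact ⟨β ^ 2 * Eβ k (↑p * (-β)), by linear_combination hEβ k (↑p * (-β))⟩
    · exact ⟨(β * y) ^ 2 * Eβ k (↑p * (β * y)), by linear_combination hEβ k (↑p * (β * y))⟩
    · exact ⟨(β * (y + α)) ^ 2 * Eα k (↑p * (β * (y + α))),
        by linear_combination hEα k (↑p * (β * (y + α)))⟩
    · have hg : rfR (α + ↑p * (β * α)) k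
          = rfR α k + ↑p * (β * α * Dα k + ↑p * ((β * α) ^ 2 * Eα k (↑p * (β * α)))) := by
        linear_combination hEα k (↑p * (β * α))
      obtain ⟨e, he⟩ := pow_expand (↑p : ℤ_[p]) (rfR α k)
        (β * α * Dα k + ↑p * ((β * α) ^ 2 * Eα k (↑p * (β * α)))) m
      refine ⟨((m + 1 : ℕ) : ℤ_[p]) * (rfR α k) ^ m * ((β * α) ^ 2 * Eα k (↑p * (β * α))) + e, ?_⟩
      rw [hg]
      linear_combination he + ((↑p : ℤ_[p]) * (rfR α k) ^ m * (β * α * Dα k)) * hν1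
  choose W hW using hcore
  have hsub : (((m + 2 : ℕ) : ℚ_[p])) - 1 = ((m + 1 : ℕ) : ℚ_[p]) := by push_cast; ring
  have hn1q' := hn1q
  push_cast at hn1q'
  have hn2q' := hn2q
  push_cast at hn2q'
  have ha6 : 1 / ((m + 2 : ℕ) : ℚ_[p]) = ((α : ℤ_[p]) : ℚ_[p]) := by rw [hαq, one_div]
  have ha5 : 1 / (((m + 2 : ℕ) : ℚ_[p]) - 1) = ((β : ℤ_[p]) : ℚ_[p]) := by
    rw [hsub, hβq, one_div]
  have ha1 : (1 - (p : ℚ_[p])) / (((m + 2 : ℕ) : ℚ_[p]) - 1)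
      = ((β + ↑p * (-β) : ℤ_[p]) : ℚ_[p]) := by
    rw [hsub]
    push_cast [hβq]
    field_simp
    ring
  have ha3 : 1 / ((m + 2 : ℕ) : ℚ_[p])
        + (p : ℚ_[p]) / (((m + 2 : ℕ) : ℚ_[p]) * (((m + 2 : ℕ) : ℚ_[p]) - 1))
      = ((α + ↑p * (β * α) : ℤ_[p]) : ℚ_[p]) := by
    rw [hsub]
    push_cast [hαq, hβq]
    field_simp
    try ring
    try tauto
  have hUnorm : ∀ k, k ≤ M →
      ‖(((rfR β k : ℤ_[p]) : ℚ_[p]) ^ (m + 2) * (k.factorial : ℚ_[p]))⁻¹‖ ≤ 1 := by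
    intro k hk
    have hkf : ((k.factorial : ℚ_[p])) = (((k.factorial : ℤ_[p]) : ℚ_[p])) := by push_cast; rfl
    rw [norm_inv, norm_mul, norm_pow, unit_coe_norm (hHu k hk), one_pow, one_mul, hkf,
      unit_coe_norm (hFu k hk)]
    norm_num
  have hCoeSum : ∀ (f : ℕ → ℤ_[p]) (s : Finset ℕ),
      ((∑ k ∈ s, f k : ℤ_[p]) : ℚ_[p]) = ∑ k ∈ s, ((f k : ℤ_[p]) : ℚ_[p]) :=
    fun f s => map_sum (PadicInt.Coe.ringHom) f s
  refine ⟨∑ k ∈ Finset.range (M + 1),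
      β * (Dα k * rfR β k * rfR α k ^ (m + 1) - Dβ k * rfR α k ^ (m + 2))
        * toZp (((rfR β k : ℤ_[p]) : ℚ_[p]) ^ (m + 2) * (k.factorial : ℚ_[p]))⁻¹,
    fun y => ?_⟩
  have ha2 : 1 / ((m + 2 : ℕ) : ℚ_[p]) + ((p : ℚ_[p]) / (((m + 2 : ℕ) : ℚ_[p]) - 1))
        * ((y : ℚ_[p]) + 1 / ((m + 2 : ℕ) : ℚ_[p]))
      = ((α + ↑p * (β * (y + α)) : ℤ_[p]) : ℚ_[p]) := by
    rw [hsub]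
    push_cast [hαq, hβq]
    field_simp
    try ring
    try tauto
  have ha4 : 1 / (((m + 2 : ℕ) : ℚ_[p]) - 1) + (y : ℚ_[p]) * (p : ℚ_[p]) / (((m + 2 : ℕ) : ℚ_[p]) - 1)
      = ((β + ↑p * (β * y) : ℤ_[p]) : ℚ_[p]) := by
    rw [hsub]
    push_cast [hβq]
    field_simp
    try ring
    try tauto
  have hDnorm : ∀ k, k ≤ M →
      ‖(((rfR (β + ↑p * (β * y)) k : ℤ_[p]) : ℚ_[p]) * ((rfR β k : ℤ_[p]) : ℚ_[p]) ^ (m + 1)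
          * (k.factorial : ℚ_[p]))⁻¹‖ ≤ 1 := by
    intro k hk
    have hkf : ((k.factorial : ℚ_[p])) = (((k.factorial : ℤ_[p]) : ℚ_[p])) := by push_cast; rfl
    rw [norm_inv, norm_mul, norm_mul, norm_pow, unit_coe_norm (hHu k hk), one_pow,
      unit_coe_norm (hh2u y k hk), one_mul, one_mul, hkf, unit_coe_norm (hFu k hk)]
    norm_num
  refine ⟨∑ k ∈ Finset.range (M + 1),
      W y k * toZp (((rfR β k : ℤ_[p]) : ℚ_[p]) ^ (m + 2) * (k.factorial : ℚ_[p]))⁻¹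
        * toZp (((rfR (β + ↑p * (β * y)) k : ℤ_[p]) : ℚ_[p]) * ((rfR β k : ℤ_[p]) : ℚ_[p]) ^ (m + 1)
            * (k.factorial : ℚ_[p]))⁻¹, ?_⟩
  simp only [ha1]
  simp only [ha2]
  simp only [ha3]
  simp only [ha4]
  simp only [ha5]
  simp only [ha6]
  simp only [← rfR_coe]
  rw [hCoeSum, hCoeSum]
  rw [show ∑ k ∈ Finset.range (M + 1),
        ((β * (Dα k * rfR β k * rfR α k ^ (m + 1) - Dβ k * rfR α k ^ (m + 2))
          * toZp (((rfR β k : ℤ_[p]) : ℚ_[p]) ^ (m + 2) * (k.factorial : ℚ_[p]))⁻¹ : ℤ_[p]) : ℚ_[p])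
      = ∑ k ∈ Finset.range (M + 1),
        ((β * (Dα k * rfR β k * rfR α k ^ (m + 1) - Dβ k * rfR α k ^ (m + 2)) : ℤ_[p]) : ℚ_[p])
          * (((rfR β k : ℤ_[p]) : ℚ_[p]) ^ (m + 2) * (k.factorial : ℚ_[p]))⁻¹ from
    Finset.sum_congr rfl fun k hk => by
      rw [PadicInt.coe_mul, toZp_coe (hUnorm k (Nat.lt_succ_iff.mp (Finset.mem_range.mp hk)))]]
  rw [show ∑ k ∈ Finset.range (M + 1),
        ((W y k * toZp (((rfR β k : ℤ_[p]) : ℚ_[p]) ^ (m + 2) * (k.factorial : ℚ_[p]))⁻¹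
          * toZp (((rfR (β + ↑p * (β * y)) k : ℤ_[p]) : ℚ_[p]) * ((rfR β k : ℤ_[p]) : ℚ_[p]) ^ (m + 1)
              * (k.factorial : ℚ_[p]))⁻¹ : ℤ_[p]) : ℚ_[p])
      = ∑ k ∈ Finset.range (M + 1),
        ((W y k : ℤ_[p]) : ℚ_[p]) * (((rfR β k : ℤ_[p]) : ℚ_[p]) ^ (m + 2) * (k.factorial : ℚ_[p]))⁻¹
          * (((rfR (β + ↑p * (β * y)) k : ℤ_[p]) : ℚ_[p]) * ((rfR β k : ℤ_[p]) : ℚ_[p]) ^ (m + 1)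
              * (k.factorial : ℚ_[p]))⁻¹ from
    Finset.sum_congr rfl fun k hk => by
      rw [PadicInt.coe_mul, PadicInt.coe_mul,
        toZp_coe (hUnorm k (Nat.lt_succ_iff.mp (Finset.mem_range.mp hk))),
        toZp_coe (hDnorm k (Nat.lt_succ_iff.mp (Finset.mem_range.mp hk)))]]
  have main : ∀ k ∈ Finset.range (M + 1),
      ((rfR (β + ↑p * (-β)) k : ℤ_[p]) : ℚ_[p]) * ((rfR (α + ↑p * (β * (y + α))) k : ℤ_[p]) : ℚ_[p])
          * ((rfR (α + ↑p * (β * α)) k : ℤ_[p]) : ℚ_[p]) ^ (m + 1)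
          / (((rfR (β + ↑p * (β * y)) k : ℤ_[p]) : ℚ_[p]) * ((rfR β k : ℤ_[p]) : ℚ_[p]) ^ (m + 1)
              * (k.factorial : ℚ_[p]))
        - ((rfR α k : ℤ_[p]) : ℚ_[p]) ^ (m + 2)
            / (((rfR β k : ℤ_[p]) : ℚ_[p]) ^ (m + 1) * (k.factorial : ℚ_[p]))
        - (1 + (y : ℚ_[p]))
            * (((β * (Dα k * rfR β k * rfR α k ^ (m + 1) - Dβ k * rfR α k ^ (m + 2)) : ℤ_[p]) : ℚ_[p])
              * (((rfR β k : ℤ_[p]) : ℚ_[p]) ^ (m + 2) * (k.factorial : ℚ_[p]))⁻¹) * (p : ℚ_[p])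
      = (p : ℚ_[p]) ^ 2 * (((W y k : ℤ_[p]) : ℚ_[p])
          * (((rfR β k : ℤ_[p]) : ℚ_[p]) ^ (m + 2) * (k.factorial : ℚ_[p]))⁻¹
          * (((rfR (β + ↑p * (β * y)) k : ℤ_[p]) : ℚ_[p]) * ((rfR β k : ℤ_[p]) : ℚ_[p]) ^ (m + 1)
              * (k.factorial : ℚ_[p]))⁻¹) := by
    intro k hk
    have hk' : k ≤ M := Nat.lt_succ_iff.mp (Finset.mem_range.mp hk)
    have hHne : ((rfR β k : ℤ_[p]) : ℚ_[p]) ≠ 0 := unit_coe_ne (hHu k hk')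
    have hFne : ((k.factorial : ℚ_[p])) ≠ 0 := by
      have := unit_coe_ne (hFu k hk')
      push_cast at this
      exact this
    have hh2ne : ((rfR (β + ↑p * (β * y)) k : ℤ_[p]) : ℚ_[p]) ≠ 0 := unit_coe_ne (hh2u y k hk')
    have keyq := congrArg (fun t : ℤ_[p] => (t : ℚ_[p])) (hW y k)
    push_cast at keyq
    exact glue ((p : ℚ_[p])) _ _ _ _ _ _ _ _ _ _ m hHne hFne hh2ne
      (by push_cast; linear_combination keyq)
  calc (∑ k ∈ Finset.range (M + 1),
        ((rfR (β + ↑p * (-β)) k : ℤ_[p]) : ℚ_[p]) * ((rfR (α + ↑p * (β * (y + α))) k : ℤ_[p]) : ℚ_[p])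
          * ((rfR (α + ↑p * (β * α)) k : ℤ_[p]) : ℚ_[p]) ^ (m + 1)
          / (((rfR (β + ↑p * (β * y)) k : ℤ_[p]) : ℚ_[p]) * ((rfR β k : ℤ_[p]) : ℚ_[p]) ^ (m + 1)
              * (k.factorial : ℚ_[p])))
      - ((∑ k ∈ Finset.range (M + 1),
          ((rfR α k : ℤ_[p]) : ℚ_[p]) ^ (m + 2)
            / (((rfR β k : ℤ_[p]) : ℚ_[p]) ^ (m + 1) * (k.factorial : ℚ_[p])))
        + (1 + (y : ℚ_[p])) * (∑ k ∈ Finset.range (M + 1),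
            ((β * (Dα k * rfR β k * rfR α k ^ (m + 1) - Dβ k * rfR α k ^ (m + 2)) : ℤ_[p]) : ℚ_[p])
              * (((rfR β k : ℤ_[p]) : ℚ_[p]) ^ (m + 2) * (k.factorial : ℚ_[p]))⁻¹) * (p : ℚ_[p]))
      = ∑ k ∈ Finset.range (M + 1),
        (((rfR (β + ↑p * (-β)) k : ℤ_[p]) : ℚ_[p]) * ((rfR (α + ↑p * (β * (y + α))) k : ℤ_[p]) : ℚ_[p])
          * ((rfR (α + ↑p * (β * α)) k : ℤ_[p]) : ℚ_[p]) ^ (m + 1)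
          / (((rfR (β + ↑p * (β * y)) k : ℤ_[p]) : ℚ_[p]) * ((rfR β k : ℤ_[p]) : ℚ_[p]) ^ (m + 1)
              * (k.factorial : ℚ_[p]))
        - ((rfR α k : ℤ_[p]) : ℚ_[p]) ^ (m + 2)
            / (((rfR β k : ℤ_[p]) : ℚ_[p]) ^ (m + 1) * (k.factorial : ℚ_[p]))
        - (1 + (y : ℚ_[p]))
            * (((β * (Dα k * rfR β k * rfR α k ^ (m + 1) - Dβ k * rfR α k ^ (m + 2)) : ℤ_[p]) : ℚ_[p])
              * (((rfR β k : ℤ_[p]) : ℚ_[p]) ^ (m + 2) * (k.factorial : ℚ_[p]))⁻¹) * (p : ℚ_[p])) := by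
        rw [Finset.sum_sub_distrib, Finset.sum_sub_distrib, ← Finset.sum_mul, ← Finset.mul_sum]
        ring
    _ = ∑ k ∈ Finset.range (M + 1), (p : ℚ_[p]) ^ 2 * (((W y k : ℤ_[p]) : ℚ_[p])
          * (((rfR β k : ℤ_[p]) : ℚ_[p]) ^ (m + 2) * (k.factorial : ℚ_[p]))⁻¹
          * (((rfR (β + ↑p * (β * y)) k : ℤ_[p]) : ℚ_[p]) * ((rfR β k : ℤ_[p]) : ℚ_[p]) ^ (m + 1)
              * (k.factorial : ℚ_[p]))⁻¹) := Finset.sum_congr rfl main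
    _ = _ := by rw [← Finset.mul_sum]
end

section
/- Let p be a prime with p ≡ 1 (mod 8). Then ∑_{k=0}^{(p-1)/4} (16k+1) · (1/8)_k · ( (1/4)_k )^5 / ( ( (7/8)_k )^5 · k! ) ≡ 0 (mod p) in ℤ_p. -/
def AA (k : ℕ) : ℕ := ∏ j ∈ Finset.range k, (8*j+1)
def BB (k : ℕ) : ℕ := ∏ j ∈ Finset.range k, (4*j+1)
def CC (k : ℕ) : ℕ := ∏ j ∈ Finset.range k, (8*j+7)

lemma rfA {p : ℕ} [Fact p.Prime] (k : ℕ) :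
    rf ((1:ℚ_[p])/8) k = (AA k : ℚ_[p]) / 8^k := by
  induction k with
  | zero => simp [rf, AA]
  | succ n ih =>
    rw [rf, Finset.prod_range_succ, ← rf, ih]
    simp only [AA, Finset.prod_range_succ]
    push_cast
    field_simp
    ring

lemma rfB {p : ℕ} [Fact p.Prime] (k : ℕ) :
    rf ((1:ℚ_[p])/4) k = (BB k : ℚ_[p]) / 4^k := by
  induction k with
  | zero => simp [rf, BB]
  | succ n ih =>
    rw [rf, Finset.prod_range_succ, ← rf, ih]
    simp only [BB, Finset.prod_range_succ]
    push_cast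
    field_simp
    ring

lemma rfC {p : ℕ} [Fact p.Prime] (k : ℕ) :
    rf ((7:ℚ_[p])/8) k = (CC k : ℚ_[p]) / 8^k := by
  induction k with
  | zero => simp [rf, CC]
  | succ n ih =>
    rw [rf, Finset.prod_range_succ, ← rf, ih]
    simp only [CC, Finset.prod_range_succ]
    push_cast
    field_simp
    ring

def nmr (k : ℕ) : ℕ := (16*k+1) * 4^k * AA k * (BB k)^5
def dnm (k : ℕ) : ℕ := (CC k)^5 * k.factorial

lemma CC_pos (k : ℕ) : 0 < CC k := Finset.prod_pos (fun j _ => by omega)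

lemma term_eq {p : ℕ} [Fact p.Prime] (k : ℕ) :
    (16 * (k : ℚ_[p]) + 1) * rf ((1:ℚ_[p])/8) k * rf ((1:ℚ_[p])/4) k ^ 5 /
      (rf ((7:ℚ_[p])/8) k ^ 5 * (k.factorial : ℚ_[p]))
    = (nmr k : ℚ_[p]) / (dnm k : ℚ_[p]) := by
  have hC : ((CC k : ℚ_[p])) ≠ 0 := by
    exact_mod_cast Nat.cast_ne_zero.mpr (CC_pos k).ne'
  have hk : ((k.factorial : ℚ_[p])) ≠ 0 := by
    exact_mod_cast Nat.cast_ne_zero.mpr k.factorial_ne_zero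
  rw [rfA, rfB, rfC, nmr, dnm]
  have h2 : ((2:ℚ_[p])) ≠ 0 := by norm_num
  have h8 : ((8:ℚ_[p])) = 2^3 := by norm_num
  have h4 : ((4:ℚ_[p])) = 2^2 := by norm_num
  push_cast
  field_simp
  have hpow : (((8:ℚ_[p]))^k)^5 = (4^k)^5 * 4^k * 8^k := by
    rw [h8, h4]
    simp only [← pow_mul, ← pow_add]
    congr 1
    ring
  rw [h8, h4]
  simp only [← pow_mul]
  ring

lemma keyLemma (p : ℕ) [Fact p.Prime] (a b t : ℕ) (ht : t < p) (hd : p ∣ a*t+b) :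
    ∀ k, k ≤ t → ((∏ j ∈ Finset.range k, (a*j+b) : ℕ) : ZMod p) * ((t-k).factorial : ZMod p)
      = (-(a:ZMod p))^k * (t.factorial : ZMod p) := by
  intro k hk
  induction k with
  | zero => simp
  | succ n ih =>
    have hn : n ≤ t := by omega
    have IH := ih hn
    have h1 : ((t - n : ℕ) : ZMod p) ≠ 0 := by
      rw [Ne, ZMod.natCast_eq_zero_iff]
      intro h
      have := Nat.le_of_dvd (by omega) h
      omega
    have hkt : n + (t - n) = t := by omega
    have h0 : (a*n+b) + a*(t-n) = a*t+b := by
      conv_rhs => rw [← hkt]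
      ring
    have e : ((a*n+b : ℕ) : ZMod p) = -((a : ZMod p) * ((t-n : ℕ) : ZMod p)) := by
      have hz : (((a*n+b) + a*(t-n) : ℕ) : ZMod p) = 0 := by
        rw [h0, ZMod.natCast_eq_zero_iff]; exact hd
      push_cast at hz ⊢
      linear_combination hz
    have hfac : ((t - n).factorial : ℕ) = (t-n) * (t-(n+1)).factorial := by
      have h2 : t - n = (t - (n+1)) + 1 := by omega
      rw [h2, Nat.factorial_succ, ← h2]
    rw [hfac] at IH
    apply mul_left_cancel₀ h1
    rw [Finset.prod_range_succ]
    push_cast at IH e ⊢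
    linear_combination (-(a:ZMod p) * (((t-n:ℕ)) : ZMod p)) * IH +
      ((∏ j ∈ Finset.range n, ((a:ZMod p)*(j:ZMod p)+(b:ZMod p))) * (((t-n:ℕ)):ZMod p) * (((t-(n+1)).factorial : ℕ) : ZMod p)) * e

lemma wilsonPair (p : ℕ) [Fact p.Prime] :
    ∀ j, j ≤ p - 1 → ((j.factorial : ℕ) : ZMod p) * (((p-1-j).factorial : ℕ) : ZMod p)
      = (-1)^(j+1) := by
  have hp1 : 1 ≤ p := (Fact.out : p.Prime).one_lt.le
  intro j hj
  induction j with
  | zero => simp [ZMod.wilsons_lemma p]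
  | succ n ih =>
    have hn : n ≤ p - 1 := by omega
    have IH := ih hn
    have hfac : ((p - 1 - n).factorial : ℕ) = (p-1-n) * (p-1-(n+1)).factorial := by
      have h2 : p - 1 - n = (p - 1 - (n+1)) + 1 := by omega
      rw [h2, Nat.factorial_succ, ← h2]
    have e : ((p - 1 - n : ℕ) : ZMod p) = -(((n+1 : ℕ)) : ZMod p) := by
      have hz : (((p-1-n) + (n+1) : ℕ) : ZMod p) = 0 := by
        have : (p-1-n) + (n+1) = p := by omega
        rw [this, ZMod.natCast_self]
      push_cast at hz ⊢
      linear_combination hz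
    rw [hfac] at IH
    rw [Nat.factorial_succ]
    push_cast at IH e ⊢
    rw [pow_succ]
    linear_combination (-1 : ZMod p) * IH + ((n.factorial : ℕ) : ZMod p) * (((p-1-(n+1)).factorial : ℕ) : ZMod p) * e

lemma signEq {R : Type*} [CommRing R] (m k : ℕ) (hk : k ≤ m) :
    (4:R)^k * (-8:R)^k * ((-4:R)^k)^5 * ((-8:R)^(m-k))^5 * (-1:R)^(m+k+1)
      = -((2:R)^(15*m)) := by
  have hmag : ((2:R)^2)^k * ((2:R)^3)^k * (((2:R)^2)^k)^5 * (((2:R)^3)^(m-k))^5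
      = (2:R)^(15*m) := by
    simp only [← pow_mul]
    rw [← pow_add, ← pow_add, ← pow_add]
    congr 1
    omega
  have h8 : (8:R) = 2^3 := by norm_num
  have h4 : (4:R) = 2^2 := by norm_num
  rcases Nat.even_or_odd k with hk1 | hk1 <;> rcases Nat.even_or_odd m with hm1 | hm1
  · have e1 : Even (m-k) := Nat.even_sub hk |>.mpr (by simp [hk1, hm1])
    have e2 : Odd (m+k+1) := by
      rw [Nat.odd_iff]; rw [Nat.even_iff] at hk1 hm1; omega
    rw [hk1.neg_pow, hk1.neg_pow, e1.neg_pow, e2.neg_one_pow, h8, h4]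
    linear_combination (-1 : R) * hmag
  · have e1 : Odd (m-k) := by
      rw [Nat.odd_iff]; rw [Nat.even_iff] at hk1; rw [Nat.odd_iff] at hm1; omega
    have e2 : Even (m+k+1) := by
      rw [Nat.even_iff]; rw [Nat.even_iff] at hk1; rw [Nat.odd_iff] at hm1; omega
    rw [hk1.neg_pow, hk1.neg_pow, e1.neg_pow, e2.neg_one_pow, h8, h4]
    linear_combination (-1 : R) * hmag
  · have e1 : Odd (m-k) := by
      rw [Nat.odd_iff]; rw [Nat.odd_iff] at hk1; rw [Nat.even_iff] at hm1; omega
    have e2 : Even (m+k+1) := by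
      rw [Nat.even_iff]; rw [Nat.odd_iff] at hk1; rw [Nat.even_iff] at hm1; omega
    rw [hk1.neg_pow, hk1.neg_pow, e1.neg_pow, e2.neg_one_pow, h8, h4]
    linear_combination (-1 : R) * hmag
  · have e1 : Even (m-k) := Nat.even_sub hk |>.mpr (by simp [Nat.not_even_iff_odd.mpr hk1, Nat.not_even_iff_odd.mpr hm1])
    have e2 : Odd (m+k+1) := by
      rw [Nat.odd_iff]; rw [Nat.odd_iff] at hk1 hm1; omega
    rw [hk1.neg_pow, hk1.neg_pow, e1.neg_pow, e2.neg_one_pow, h8, h4]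
    linear_combination (-1 : R) * hmag

lemma factNe (p : ℕ) [Fact p.Prime] (j : ℕ) (hj : j < p) :
    ((j.factorial : ℕ) : ZMod p) ≠ 0 := by
  rw [Ne, ZMod.natCast_eq_zero_iff]
  intro h
  have := ((Nat.Prime.dvd_factorial (Fact.out : p.Prime)).mp h)
  omega

lemma pairEq (p m : ℕ) [Fact p.Prime] (hm : p = 8*m+1) (k : ℕ) (hk : k ≤ m) :
    ((nmr k : ℕ) : ZMod p) * ((dnm (m-k) : ℕ) : ZMod p)
      + ((dnm k : ℕ) : ZMod p) * ((nmr (m-k) : ℕ) : ZMod p) = 0 := by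
  have hp2 : 2 ≤ p := (Fact.out : p.Prime).two_le
  have hm1 : 1 ≤ m := by omega
  have kA := keyLemma p 8 1 m (by omega) (by rw [← hm])
  have kB := keyLemma p 4 1 (2*m) (by omega) (by rw [show 4*(2*m)+1 = p by omega])
  have kC := keyLemma p 8 7 (7*m) (by omega)
    (by rw [show 8*(7*m)+7 = 7*p by omega]; exact dvd_mul_left p 7)
  have eA1 : ((AA k : ℕ) : ZMod p) * ((m-k).factorial : ZMod p)
      = (-(8:ZMod p))^k * (m.factorial : ZMod p) := by
    have := kA k hk; simp only [AA]; push_cast at this ⊢; exact this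
  have eA2 : ((AA (m-k) : ℕ) : ZMod p) * ((k).factorial : ZMod p)
      = (-(8:ZMod p))^(m-k) * (m.factorial : ZMod p) := by
    have := kA (m-k) (by omega); rw [Nat.sub_sub_self hk] at this
    simp only [AA]; push_cast at this ⊢; exact this
  have eB1 : ((BB k : ℕ) : ZMod p) * ((2*m-k).factorial : ZMod p)
      = (-(4:ZMod p))^k * ((2*m).factorial : ZMod p) := by
    have := kB k (by omega); simp only [BB]; push_cast at this ⊢; exact this
  have eB2 : ((BB (m-k) : ℕ) : ZMod p) * ((m+k).factorial : ZMod p)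
      = (-(4:ZMod p))^(m-k) * ((2*m).factorial : ZMod p) := by
    have := kB (m-k) (by omega); rw [show 2*m-(m-k) = m+k by omega] at this
    simp only [BB]; push_cast at this ⊢; exact this
  have eC1 : ((CC k : ℕ) : ZMod p) * ((7*m-k).factorial : ZMod p)
      = (-(8:ZMod p))^k * ((7*m).factorial : ZMod p) := by
    have := kC k (by omega); simp only [CC]; push_cast at this ⊢; exact this
  have eC2 : ((CC (m-k) : ℕ) : ZMod p) * ((6*m+k).factorial : ZMod p)
      = (-(8:ZMod p))^(m-k) * ((7*m).factorial : ZMod p) := by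
    have := kC (m-k) (by omega); rw [show 7*m-(m-k) = 6*m+k by omega] at this
    simp only [CC]; push_cast at this ⊢; exact this
  have w1 : ((m+k).factorial : ZMod p) * ((7*m-k).factorial : ZMod p)
      = (-1 : ZMod p)^(m+k+1) := by
    have := wilsonPair p (m+k) (by omega)
    rw [show p-1-(m+k) = 7*m-k by omega] at this
    exact this
  have w2 : ((2*m-k).factorial : ZMod p) * ((6*m+k).factorial : ZMod p)
      = (-1 : ZMod p)^(m+(m-k)+1) := by
    have := wilsonPair p (2*m-k) (by omega)
    rw [show p-1-(2*m-k) = 6*m+k by omega, show 2*m-k+1 = m+(m-k)+1 by omega] at this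
    exact this
  set F : ℕ → ZMod p := fun j => ((j.factorial : ℕ) : ZMod p) with hF
  set M : ZMod p := F (m-k) * F k * (F (2*m-k))^5 * (F (m+k))^5 * (F (7*m-k))^5
      * (F (6*m+k))^5 with hM
  have hMne : M ≠ 0 := by
    rw [hM]
    repeat' apply mul_ne_zero
    all_goals
      first
      | (apply pow_ne_zero; apply factNe; omega)
      | (apply factNe; omega)
  have hR : ∀ x : ZMod p, x * M = 0 → x = 0 := by
    intro x hx
    rcases mul_eq_zero.mp hx with h | h
    · exact h
    · exact absurd h hMne
  apply hR
  have hp0 : ((8*m+1 : ℕ) : ZMod p) = 0 := by rw [← hm]; exact ZMod.natCast_self p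
  have h15 : ∀ n : ℕ, ((-1 : ZMod p)^n)^5 = (-1 : ZMod p)^n := by
    intro n
    rw [← pow_mul, show n*5 = 5*n by ring, pow_mul]
    norm_num
  have T1 : ((nmr k : ℕ) : ZMod p) * ((dnm (m-k) : ℕ) : ZMod p) * M
      = ((16*k+1 : ℕ) : ZMod p) * (-((2:ZMod p)^(15*m)))
        * ((m.factorial : ZMod p) * ((2*m).factorial : ZMod p)^5
          * ((7*m).factorial : ZMod p)^5 * (F (m-k) * F k)) := by
    calc ((nmr k : ℕ) : ZMod p) * ((dnm (m-k) : ℕ) : ZMod p) * M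
        = ((16*k+1 : ℕ) : ZMod p) * ((4:ZMod p)^k
          * ((((AA k : ℕ) : ZMod p) * ((m-k).factorial : ZMod p))
          * (((BB k : ℕ) : ZMod p) * ((2*m-k).factorial : ZMod p))^5
          * ((((CC (m-k)) : ℕ) : ZMod p) * ((6*m+k).factorial : ZMod p))^5
          * (((m+k).factorial : ZMod p) * ((7*m-k).factorial : ZMod p))^5
          * (F (m-k) * F k))) := by
          simp only [nmr, dnm, hM, hF]
          push_cast
          ring
      _ = ((16*k+1 : ℕ) : ZMod p) * ((4:ZMod p)^k
          * (((-(8:ZMod p))^k * (m.factorial : ZMod p))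
          * ((-(4:ZMod p))^k * ((2*m).factorial : ZMod p))^5
          * ((-(8:ZMod p))^(m-k) * ((7*m).factorial : ZMod p))^5
          * (((-1 : ZMod p)^(m+k+1))^5)
          * (F (m-k) * F k))) := by rw [eA1, eB1, eC2, w1]
      _ = ((16*k+1 : ℕ) : ZMod p) * ((4:ZMod p)^k
          * (((-(8:ZMod p))^k * (m.factorial : ZMod p))
          * ((-(4:ZMod p))^k * ((2*m).factorial : ZMod p))^5
          * ((-(8:ZMod p))^(m-k) * ((7*m).factorial : ZMod p))^5
          * ((-1 : ZMod p)^(m+k+1))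
          * (F (m-k) * F k))) := by rw [h15]
      _ = ((16*k+1 : ℕ) : ZMod p) * (((4:ZMod p)^k * (-(8:ZMod p))^k
            * ((-(4:ZMod p))^k)^5 * ((-(8:ZMod p))^(m-k))^5 * (-1:ZMod p)^(m+k+1))
          * ((m.factorial : ZMod p) * ((2*m).factorial : ZMod p)^5
            * ((7*m).factorial : ZMod p)^5 * (F (m-k) * F k))) := by ring
      _ = _ := by rw [signEq m k hk]; ring
  have T2 : ((dnm k : ℕ) : ZMod p) * ((nmr (m-k) : ℕ) : ZMod p) * M
      = ((16*(m-k)+1 : ℕ) : ZMod p) * (-((2:ZMod p)^(15*m)))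
        * ((m.factorial : ZMod p) * ((2*m).factorial : ZMod p)^5
          * ((7*m).factorial : ZMod p)^5 * (F (m-k) * F k)) := by
    calc ((dnm k : ℕ) : ZMod p) * ((nmr (m-k) : ℕ) : ZMod p) * M
        = ((16*(m-k)+1 : ℕ) : ZMod p) * ((4:ZMod p)^(m-k)
          * ((((AA (m-k) : ℕ) : ZMod p) * ((k).factorial : ZMod p))
          * (((BB (m-k) : ℕ) : ZMod p) * (((m+k)).factorial : ZMod p))^5
          * ((((CC k) : ℕ) : ZMod p) * ((7*m-k).factorial : ZMod p))^5
          * (((2*m-k).factorial : ZMod p) * ((6*m+k).factorial : ZMod p))^5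
          * (F (m-k) * F k))) := by
          simp only [nmr, dnm, hM, hF]
          push_cast
          ring
      _ = ((16*(m-k)+1 : ℕ) : ZMod p) * ((4:ZMod p)^(m-k)
          * (((-(8:ZMod p))^(m-k) * (m.factorial : ZMod p))
          * ((-(4:ZMod p))^(m-k) * ((2*m).factorial : ZMod p))^5
          * ((-(8:ZMod p))^k * ((7*m).factorial : ZMod p))^5
          * (((-1 : ZMod p)^(m+(m-k)+1))^5)
          * (F (m-k) * F k))) := by rw [eA2, eB2, eC1, w2]
      _ = ((16*(m-k)+1 : ℕ) : ZMod p) * ((4:ZMod p)^(m-k)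
          * (((-(8:ZMod p))^(m-k) * (m.factorial : ZMod p))
          * ((-(4:ZMod p))^(m-k) * ((2*m).factorial : ZMod p))^5
          * ((-(8:ZMod p))^k * ((7*m).factorial : ZMod p))^5
          * ((-1 : ZMod p)^(m+(m-k)+1))
          * (F (m-k) * F k))) := by rw [h15]
      _ = ((16*(m-k)+1 : ℕ) : ZMod p) * (((4:ZMod p)^(m-k) * (-(8:ZMod p))^(m-k)
            * ((-(4:ZMod p))^(m-k))^5 * ((-(8:ZMod p))^(m-(m-k)))^5
            * (-1:ZMod p)^(m+(m-k)+1))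
          * ((m.factorial : ZMod p) * ((2*m).factorial : ZMod p)^5
            * ((7*m).factorial : ZMod p)^5 * (F (m-k) * F k))) := by
          rw [Nat.sub_sub_self hk]; ring
      _ = _ := by rw [signEq m (m-k) (by omega)]; ring
  have e16 : ((16*k+1 : ℕ) : ZMod p) + ((16*(m-k)+1 : ℕ) : ZMod p)
      = 2 * ((8*m+1 : ℕ) : ZMod p) := by
    push_cast [Nat.cast_sub hk]
    ring
  calc (((nmr k : ℕ) : ZMod p) * ((dnm (m-k) : ℕ) : ZMod p)
        + ((dnm k : ℕ) : ZMod p) * ((nmr (m-k) : ℕ) : ZMod p)) * M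
      = ((nmr k : ℕ) : ZMod p) * ((dnm (m-k) : ℕ) : ZMod p) * M
        + ((dnm k : ℕ) : ZMod p) * ((nmr (m-k) : ℕ) : ZMod p) * M := by ring
    _ = (((16*k+1 : ℕ) : ZMod p) + ((16*(m-k)+1 : ℕ) : ZMod p))
        * ((-((2:ZMod p)^(15*m)))
        * ((m.factorial : ZMod p) * ((2*m).factorial : ZMod p)^5
          * ((7*m).factorial : ZMod p)^5 * (F (m-k) * F k))) := by
        rw [T1, T2]; ring
    _ = 0 := by rw [e16, hp0]; ring

lemma dnmNe (p m : ℕ) [Fact p.Prime] (hm : p = 8*m+1) (k : ℕ) (hk : k ≤ 2*m) :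
    ((dnm k : ℕ) : ZMod p) ≠ 0 := by
  have hm1 : 1 ≤ m := by have := (Fact.out : p.Prime).two_le; omega
  simp only [dnm, CC]
  push_cast
  apply mul_ne_zero
  · apply pow_ne_zero
    rw [Finset.prod_ne_zero_iff]
    intro j hj
    rw [Finset.mem_range] at hj
    have : ((8*j+7 : ℕ) : ZMod p) ≠ 0 := by
      rw [Ne, ZMod.natCast_eq_zero_iff]
      intro hdvd
      have h1 : p ≤ 8*j+7 := Nat.le_of_dvd (by omega) hdvd
      have h2 : p ∣ (8*j+7) - p := Nat.dvd_sub hdvd dvd_rfl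
      have h3 : (8*j+7) - p = 0 := Nat.eq_zero_of_dvd_of_lt h2 (by omega)
      omega
    push_cast at this
    exact this
  · exact factNe p k (by omega)

lemma sumZero (p m : ℕ) [Fact p.Prime] (hm : p = 8*m+1) :
    ∑ k ∈ Finset.range (2*m+1), ((nmr k : ℕ) : ZMod p) / ((dnm k : ℕ) : ZMod p)
      = 0 := by
  have hm1 : 1 ≤ m := by have := (Fact.out : p.Prime).two_le; omega
  have hp2 : (2 : ZMod p) ≠ 0 := by
    have : ((2:ℕ) : ZMod p) ≠ 0 := by
      rw [Ne, ZMod.natCast_eq_zero_iff]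
      intro h
      have := Nat.le_of_dvd (by omega) h
      omega
    exact_mod_cast this
  set f : ℕ → ZMod p := fun k => ((nmr k : ℕ) : ZMod p) / ((dnm k : ℕ) : ZMod p)
    with hf
  have hsplit : ∑ k ∈ Finset.range (2*m+1), f k
      = (∑ k ∈ Finset.range (m+1), f k) + ∑ k ∈ Finset.Ico (m+1) (2*m+1), f k := by
    rw [Finset.range_eq_Ico, ← Finset.sum_Ico_consecutive _ (by omega : 0 ≤ m+1)
      (by omega : m+1 ≤ 2*m+1)]
    rw [Finset.range_eq_Ico]
  have htail : ∑ k ∈ Finset.Ico (m+1) (2*m+1), f k = 0 := by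
    apply Finset.sum_eq_zero
    intro k hk
    rw [Finset.mem_Ico] at hk
    have hAA : p ∣ AA k := by
      rw [hm]
      exact Finset.dvd_prod_of_mem (fun j => 8*j+1) (Finset.mem_range.mpr (by omega))
    have hnm : p ∣ nmr k := hAA.trans ⟨(16*k+1)*4^k*(BB k)^5, by rw [nmr]; ring⟩
    have : ((nmr k : ℕ) : ZMod p) = 0 := (ZMod.natCast_eq_zero_iff _ _).mpr hnm
    rw [hf]
    simp [this]
  have hpair : ∀ k ∈ Finset.range (m+1), f k + f (m-k) = 0 := by
    intro k hk
    rw [Finset.mem_range] at hk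
    have hk' : k ≤ m := by omega
    rw [hf]
    simp only
    rw [div_add_div _ _ (dnmNe p m hm k (by omega)) (dnmNe p m hm (m-k) (by omega)),
      pairEq p m hm k hk', zero_div]
  have hrefl : ∑ k ∈ Finset.range (m+1), f k
      = ∑ k ∈ Finset.range (m+1), f (m-k) := by
    have := Finset.sum_range_reflect f (m+1)
    simp only [Nat.add_sub_cancel] at this
    exact this.symm
  have h2P : (2 : ZMod p) * ∑ k ∈ Finset.range (m+1), f k = 0 := by
    calc (2 : ZMod p) * ∑ k ∈ Finset.range (m+1), f k
        = (∑ k ∈ Finset.range (m+1), f k) + ∑ k ∈ Finset.range (m+1), f (m-k) := by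
          rw [← hrefl]; ring
      _ = ∑ k ∈ Finset.range (m+1), (f k + f (m-k)) := by rw [Finset.sum_add_distrib]
      _ = 0 := Finset.sum_eq_zero hpair
  have hP : ∑ k ∈ Finset.range (m+1), f k = 0 := by
    rcases mul_eq_zero.mp h2P with h | h
    · exact absurd h hp2
    · exact h
  rw [hsplit, htail, hP, add_zero]

/-- Let `p ≡ 1 (mod 8)` be a prime. Then
`∑_{k=0}^{(p-1)/4} (16k+1) (1/8)_k ((1/4)_k)⁵ / (((7/8)_k)⁵ k!) ≡ 0 (mod p)`
in `ℤ_p`, i.e. the sum lies in `pℤ_p`. -/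
theorem stmt16 (p : ℕ) [Fact p.Prime] (hp : p % 8 = 1) :
    ∃ c : ℤ_[p],
      (∑ k ∈ Finset.range ((p - 1) / 4 + 1),
        (16 * (k : ℚ_[p]) + 1) *
          rf ((1 : ℚ_[p]) / 8) k * rf ((1 : ℚ_[p]) / 4) k ^ 5 /
          (rf ((7 : ℚ_[p]) / 8) k ^ 5 * (k.factorial : ℚ_[p])))
      = (p : ℚ_[p]) * (c : ℚ_[p]) := by
  have hprime : p.Prime := Fact.out
  have hp2 := hprime.two_le
  set m := p / 8 with hmdef
  have hm : p = 8*m+1 := by omega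
  have hm1 : 1 ≤ m := by omega
  have hn : (p-1)/4 + 1 = 2*m+1 := by omega
  rw [hn, Finset.sum_congr rfl (fun k _ => term_eq k)]
  set D : ℕ := ∏ j ∈ Finset.range (2*m+1), dnm j with hD
  have hdnm_pos : ∀ k, 0 < dnm k := fun k =>
    Nat.mul_pos (pow_pos (CC_pos k) 5) k.factorial_pos
  have hdvd : ∀ k ∈ Finset.range (2*m+1), dnm k ∣ D :=
    fun k hk => Finset.dvd_prod_of_mem _ hk
  have hdnmQ : ∀ k, ((dnm k : ℕ) : ℚ_[p]) ≠ 0 := fun k =>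
    Nat.cast_ne_zero.mpr (hdnm_pos k).ne'
  have hDpos : 0 < D := Finset.prod_pos (fun j _ => hdnm_pos j)
  have hDQ : ((D : ℕ) : ℚ_[p]) ≠ 0 := Nat.cast_ne_zero.mpr hDpos.ne'
  set W : ℕ := ∑ k ∈ Finset.range (2*m+1), nmr k * (D / dnm k) with hW
  -- key cast identity in ℚ_[p]
  have hSD : (∑ k ∈ Finset.range (2*m+1), ((nmr k : ℕ) : ℚ_[p]) / ((dnm k : ℕ) : ℚ_[p]))
      * ((D : ℕ) : ℚ_[p]) = ((W : ℕ) : ℚ_[p]) := by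
    rw [hW, Finset.sum_mul, Nat.cast_sum]
    apply Finset.sum_congr rfl
    intro k hk
    rw [Nat.cast_mul, Nat.cast_div (hdvd k hk) (hdnmQ k)]
    field_simp
  -- W is divisible by p
  have hW0 : ((W : ℕ) : ZMod p) = 0 := by
    rw [hW, Nat.cast_sum]
    have : ∀ k ∈ Finset.range (2*m+1),
        ((nmr k * (D / dnm k) : ℕ) : ZMod p)
          = ((D : ℕ) : ZMod p) * (((nmr k : ℕ) : ZMod p) / ((dnm k : ℕ) : ZMod p)) := by
      intro k hk
      rw [Finset.mem_range] at hk
      have hne : ((dnm k : ℕ) : ZMod p) ≠ 0 := dnmNe p m hm k (by omega)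
      have hcast : ((dnm k : ℕ) : ZMod p) * ((D / dnm k : ℕ) : ZMod p)
          = ((D : ℕ) : ZMod p) := by
        rw [← Nat.cast_mul, Nat.mul_div_cancel' (hdvd k (Finset.mem_range.mpr hk))]
      rw [Nat.cast_mul, mul_div_assoc' ((D:ℕ) : ZMod p), eq_div_iff hne]
      linear_combination ((nmr k : ℕ) : ZMod p) * hcast
    rw [Finset.sum_congr rfl this, ← Finset.mul_sum, sumZero p m hm, mul_zero]
  obtain ⟨V, hV⟩ := (ZMod.natCast_eq_zero_iff W p).mp hW0
  -- norm facts
  have hDZ : ¬ ((p : ℤ) ∣ (D : ℤ)) := by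
    rw [Int.natCast_dvd_natCast]
    intro h
    have : ((D : ℕ) : ZMod p) = 0 := (ZMod.natCast_eq_zero_iff _ _).mpr h
    rw [hD, Nat.cast_prod] at this
    have hne : ∀ j ∈ Finset.range (2*m+1), ((dnm j : ℕ) : ZMod p) ≠ 0 := by
      intro j hj
      rw [Finset.mem_range] at hj
      exact dnmNe p m hm j (by omega)
    exact (Finset.prod_ne_zero_iff.mpr hne) this
  have hnormD : ‖((D : ℕ) : ℚ_[p])‖ = 1 := by
    have h1 : ‖((D : ℤ) : ℚ_[p])‖ ≤ 1 := Padic.norm_int_le_one _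
    have h2 : ¬ (‖((D : ℤ) : ℚ_[p])‖ < 1) := by
      rw [Padic.norm_intCast_lt_one_iff]
      exact hDZ
    push_cast at h1 h2 ⊢
    linarith [lt_or_eq_of_le h1]
  have hnormV : ‖((V : ℕ) : ℚ_[p])‖ ≤ 1 := by
    have := Padic.norm_int_le_one (p := p) (V : ℤ)
    push_cast at this ⊢
    exact this
  refine ⟨⟨((V : ℕ) : ℚ_[p]) / ((D : ℕ) : ℚ_[p]), ?_⟩, ?_⟩
  · rw [norm_div, hnormD, div_one]
    exact hnormV
  · show _ = (p : ℚ_[p]) * (((V : ℕ) : ℚ_[p]) / ((D : ℕ) : ℚ_[p]))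
    rw [mul_div_assoc', eq_div_iff hDQ, hSD, hV]
    push_cast
    ring
end
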